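/- arXiv:2604.11205 — 6 statements merged into one kernel-verified Lean document; each statement's English description precedes it below -/
import Mathlib

section
/- Let E be a positive integer with at most C·log y prime factors (C an absolute constant) and let y ≥ 9. Then for every ε > 0, the number of positive integers n ≤ y^B (B a fixed constant) all of whose prime factors divide E is O_ε(y^ε). -/
open scoped Classical

open Finset in
private lemma pow_neg_sigma_eq {x : ℝ} (hx : 0 ≤ x) (σ : ℝ) (a : ℕ) :
    ((x ^ a : ℝ)) ^ (-σ) = (x ^ (-σ)) ^ a := by
  rw [← Real.rpow_natCast x a, ← Real.rpow_mul hx, mul_comm, Real.rpow_mul hx,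
    Real.rpow_natCast]

open Finset in
private lemma core (P : Finset ℕ) (hP : ∀ p ∈ P, p.Prime) (N : ℕ) (σ : ℝ) (hσ : 0 < σ) :
    ∑ n ∈ (Finset.Icc 1 N).filter (fun n => ∀ p : ℕ, p.Prime → p ∣ n → p ∈ P),
      (n : ℝ) ^ (-σ) ≤ ∏ p ∈ P, (1 - (p : ℝ) ^ (-σ))⁻¹ := by
  set S := (Finset.Icc 1 N).filter (fun n => ∀ p : ℕ, p.Prime → p ∣ n → p ∈ P) with hS
  have hmem : ∀ n ∈ S, 1 ≤ n ∧ n ≤ N ∧ ∀ p : ℕ, p.Prime → p ∣ n → p ∈ P := by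
    intro n hn
    simp only [hS, mem_filter, mem_Icc] at hn
    exact ⟨hn.1.1, hn.1.2, hn.2⟩
  -- factorization representation
  have hfac : ∀ n ∈ S, n = ∏ p ∈ P, p ^ n.factorization p := by
    intro n hn
    obtain ⟨h1, _, hsm⟩ := hmem n hn
    have hn0 : n ≠ 0 := by omega
    conv_lhs => rw [← Nat.factorization_prod_pow_eq_self hn0]
    refine Finsupp.prod_of_support_subset _ ?_ _ (fun i _ => pow_zero i)
    intro p hp
    rw [Nat.support_factorization, Nat.mem_primeFactors] at hp
    exact hsm p hp.1 hp.2.1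
  -- real term equality
  have hterm : ∀ n ∈ S, (n : ℝ) ^ (-σ) = ∏ p ∈ P, ((p : ℝ) ^ (-σ)) ^ (n.factorization p) := by
    intro n hn
    have : ((n : ℕ) : ℝ) = ∏ p ∈ P, ((p : ℝ)) ^ (n.factorization p) := by
      conv_lhs => rw [hfac n hn]
      push_cast
      rfl
    rw [this, ← Real.finset_prod_rpow _ _ (fun p _ => by positivity) (-σ)]
    exact Finset.prod_congr rfl (fun p _ => pow_neg_sigma_eq (by positivity) σ _)
  -- switch to subtype-indexed products
  set g : ↥P → ℕ → ℝ := fun p a => ((p : ℝ) ^ (-σ)) ^ a with hg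
  set Φ : ℕ → (↥P → ℕ) := fun n p => n.factorization p with hΦ
  have hterm' : ∀ n ∈ S, (n : ℝ) ^ (-σ) = ∏ p : ↥P, g p (Φ n p) := by
    intro n hn
    rw [hterm n hn, ← Finset.prod_coe_sort]
  calc ∑ n ∈ S, (n : ℝ) ^ (-σ)
      = ∑ n ∈ S, ∏ p : ↥P, g p (Φ n p) := Finset.sum_congr rfl hterm'
    _ = ∑ f ∈ S.image Φ, ∏ p : ↥P, g p (f p) := by
        rw [Finset.sum_image]
        intro a ha b hb hab
        have hA := hfac a ha
        have hB := hfac b hb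
        rw [hA, hB]
        refine Finset.prod_congr rfl (fun p hp => ?_)
        have : Φ a ⟨p, hp⟩ = Φ b ⟨p, hp⟩ := by rw [hab]
        simpa [hΦ] using congrArg (p ^ ·) this
    _ ≤ ∑ f ∈ Fintype.piFinset (fun _ : ↥P => Finset.range (N + 1)), ∏ p : ↥P, g p (f p) := by
        refine Finset.sum_le_sum_of_subset_of_nonneg ?_ (fun f _ _ => ?_)
        · intro f hf
          rw [Finset.mem_image] at hf
          obtain ⟨n, hn, rfl⟩ := hf
          obtain ⟨h1, h2, _⟩ := hmem n hn
          rw [Fintype.mem_piFinset]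
          intro p
          rw [Finset.mem_range]
          have := Nat.factorization_lt (p : ℕ) (n := n) (by omega)
          simp only [hΦ]
          omega
        · exact Finset.prod_nonneg fun p _ => pow_nonneg (Real.rpow_nonneg (by positivity) _) _
    _ = ∏ p : ↥P, ∑ a ∈ Finset.range (N + 1), g p a :=
        (Finset.prod_univ_sum _ _).symm
    _ = ∏ p ∈ P, ∑ a ∈ Finset.range (N + 1), ((p : ℝ) ^ (-σ)) ^ a := by
        simp only [hg]
        exact Finset.prod_coe_sort P (fun p => ∑ a ∈ Finset.range (N + 1), ((p : ℝ) ^ (-σ)) ^ a)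
    _ ≤ ∏ p ∈ P, (1 - (p : ℝ) ^ (-σ))⁻¹ := by
        refine Finset.prod_le_prod (fun p _ => ?_) (fun p hp => ?_)
        · exact Finset.sum_nonneg fun a _ => pow_nonneg (Real.rpow_nonneg (by positivity) _) _
        · have hp2 : 2 ≤ p := (hP p hp).two_le
          have hx1 : (p : ℝ) ^ (-σ) < 1 :=
            Real.rpow_lt_one_of_one_lt_of_neg (by exact_mod_cast by omega) (by linarith)
          have hx0 : (0 : ℝ) ≤ (p : ℝ) ^ (-σ) := Real.rpow_nonneg (by positivity) _
          set x := (p : ℝ) ^ (-σ)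
          have h1x : 0 < 1 - x := by linarith
          rw [geom_sum_eq hx1.ne, ← neg_div_neg_eq]
          have hnum : -(x ^ (N + 1) - 1) = 1 - x ^ (N + 1) := by ring
          have hden : -(x - 1) = 1 - x := by ring
          rw [hnum, hden, ← one_div]
          have hxp : (0 : ℝ) ≤ x ^ (N + 1) := pow_nonneg hx0 _
          gcongr
          linarith

theorem stmt1 (B C : ℝ) (hB : 0 < B) (hC : 0 < C) (ε : ℝ) (hε : 0 < ε) :
    ∃ K : ℝ, 0 < K ∧ ∀ y : ℝ, 9 ≤ y → ∀ E : ℕ, 0 < E →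
      (E.primeFactors.card : ℝ) ≤ C * Real.log y →
      (((Finset.Icc 1 ⌊y ^ B⌋₊).filter
          (fun n => ∀ p : ℕ, p.Prime → p ∣ n → p ∣ E)).card : ℝ)
        ≤ K * y ^ ε := by
  set σ : ℝ := ε / (2 * B) with hσdef
  have hσ : 0 < σ := by positivity
  set M : ℝ := max 2 (4 * C / ε) with hMdef
  have hM2 : (2 : ℝ) ≤ M := le_max_left _ _
  have hMC : 4 * C / ε ≤ M := le_max_right _ _
  have hM0 : (0 : ℝ) < M := by linarith
  set T : ℝ := M ^ (1 / σ) with hTdef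
  have hT1 : (1 : ℝ) ≤ T := Real.one_le_rpow (by linarith) (by positivity)
  have hT0 : (0 : ℝ) < T := by linarith
  have hTσ : T ^ (-σ) = M⁻¹ := by
    rw [hTdef, ← Real.rpow_mul hM0.le, one_div, inv_mul_eq_div, neg_div, div_self hσ.ne', Real.rpow_neg_one]
  have h2σ : (2 : ℝ) ^ (-σ) < 1 :=
    Real.rpow_lt_one_of_one_lt_of_neg one_lt_two (by linarith)
  have h2σ0 : (0 : ℝ) < (2 : ℝ) ^ (-σ) := Real.rpow_pos_of_pos two_pos _
  set c0 : ℝ := (1 - (2 : ℝ) ^ (-σ))⁻¹ with hc0def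
  have hc0pos : 0 < c0 := by rw [hc0def]; exact inv_pos.2 (by linarith)
  have hc0_1 : 1 ≤ c0 := by
    rw [hc0def]
    rw [one_le_inv_iff₀]
    constructor <;> linarith
  refine ⟨c0 ^ ⌊T⌋₊, pow_pos hc0pos _, ?_⟩
  intro y hy E hE hcardE
  have hy0 : (0 : ℝ) < y := by linarith
  have hy1 : (1 : ℝ) ≤ y := by linarith
  have hlogy : 0 < Real.log y := Real.log_pos (by linarith)
  set N : ℕ := ⌊y ^ B⌋₊ with hN
  set P : Finset ℕ := E.primeFactors with hP
  have hPprime : ∀ p ∈ P, p.Prime := fun p hp => Nat.prime_of_mem_primeFactors hp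
  have hSeq : (Finset.Icc 1 N).filter (fun n => ∀ p : ℕ, p.Prime → p ∣ n → p ∣ E)
      = (Finset.Icc 1 N).filter (fun n => ∀ p : ℕ, p.Prime → p ∣ n → p ∈ P) := by
    apply Finset.filter_congr
    intro n _
    constructor
    · intro h p hp hpn
      exact Nat.mem_primeFactors.2 ⟨hp, h p hp hpn, hE.ne'⟩
    · intro h p hp hpn
      exact (Nat.mem_primeFactors.1 (h p hp hpn)).2.1
  set S := (Finset.Icc 1 N).filter (fun n => ∀ p : ℕ, p.Prime → p ∣ n → p ∈ P) with hS
  -- Rankin step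
  have hyB0 : (0 : ℝ) ≤ y ^ B := Real.rpow_nonneg hy0.le B
  have step1 : (S.card : ℝ) ≤ (y ^ B) ^ σ * ∑ n ∈ S, (n : ℝ) ^ (-σ) := by
    rw [Finset.mul_sum]
    calc (S.card : ℝ) = ∑ _n ∈ S, (1 : ℝ) := by
          rw [Finset.sum_const, nsmul_eq_mul, mul_one]
      _ ≤ ∑ n ∈ S, (y ^ B) ^ σ * (n : ℝ) ^ (-σ) := by
          refine Finset.sum_le_sum fun n hn => ?_
          simp only [hS, Finset.mem_filter, Finset.mem_Icc] at hn
          obtain ⟨⟨h1, h2⟩, -⟩ := hn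
          have hn0 : (0 : ℝ) < (n : ℝ) := by exact_mod_cast h1
          have hnle : (n : ℝ) ≤ y ^ B :=
            le_trans (by exact_mod_cast h2) (Nat.floor_le hyB0)
          have hmono : (n : ℝ) ^ σ ≤ (y ^ B) ^ σ :=
            Real.rpow_le_rpow hn0.le hnle hσ.le
          have hnσ : (0 : ℝ) < (n : ℝ) ^ σ := Real.rpow_pos_of_pos hn0 σ
          rw [Real.rpow_neg hn0.le, ← div_eq_mul_inv, le_div_iff₀ hnσ, one_mul]
          exact hmono
  have step2 : ∑ n ∈ S, (n : ℝ) ^ (-σ) ≤ ∏ p ∈ P, (1 - (p : ℝ) ^ (-σ))⁻¹ :=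
    core P hPprime N σ hσ
  -- bound the product
  have hxlt : ∀ p ∈ P, (p : ℝ) ^ (-σ) < 1 := by
    intro p hp
    have := (hPprime p hp).two_le
    exact Real.rpow_lt_one_of_one_lt_of_neg (by exact_mod_cast by omega) (by linarith)
  have hxle2 : ∀ p ∈ P, (p : ℝ) ^ (-σ) ≤ (2 : ℝ) ^ (-σ) := by
    intro p hp
    have h2 := (hPprime p hp).two_le
    exact Real.rpow_le_rpow_of_nonpos two_pos (by exact_mod_cast h2) (by linarith)
  have hsmall : ∏ p ∈ P.filter (fun p : ℕ => (p : ℝ) ≤ T), (1 - (p : ℝ) ^ (-σ))⁻¹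
      ≤ c0 ^ ⌊T⌋₊ := by
    have hb : ∀ p ∈ P.filter (fun p : ℕ => (p : ℝ) ≤ T), (1 - (p : ℝ) ^ (-σ))⁻¹ ≤ c0 := by
      intro p hp
      have hp' := Finset.mem_filter.1 hp
      rw [hc0def]
      exact inv_anti₀ (by linarith) (by linarith [hxle2 p hp'.1])
    calc ∏ p ∈ P.filter (fun p : ℕ => (p : ℝ) ≤ T), (1 - (p : ℝ) ^ (-σ))⁻¹
        ≤ c0 ^ (P.filter (fun p : ℕ => (p : ℝ) ≤ T)).card := by
          rw [← Finset.prod_const]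
          refine Finset.prod_le_prod (fun p hp => ?_) hb
          exact inv_nonneg.2 (by linarith [hxlt p (Finset.mem_filter.1 hp).1])
      _ ≤ c0 ^ ⌊T⌋₊ := by
          apply pow_le_pow_right₀ hc0_1
          have hsub : P.filter (fun p : ℕ => (p : ℝ) ≤ T) ⊆ Finset.Icc 1 ⌊T⌋₊ := by
            intro p hp
            have hp' := Finset.mem_filter.1 hp
            have h1 := (hPprime p hp'.1).one_lt
            rw [Finset.mem_Icc]
            exact ⟨by omega, Nat.le_floor hp'.2⟩
          calc (P.filter (fun p : ℕ => (p : ℝ) ≤ T)).card ≤ (Finset.Icc 1 ⌊T⌋₊).card :=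
                Finset.card_le_card hsub
            _ = ⌊T⌋₊ := by rw [Nat.card_Icc]; omega
  have hbig : ∏ p ∈ P.filter (fun p : ℕ => ¬ (p : ℝ) ≤ T), (1 - (p : ℝ) ^ (-σ))⁻¹
      ≤ y ^ (ε / 2) := by
    have hMinv : M⁻¹ ≤ 1 / 2 := by
      rw [div_eq_mul_inv, one_mul]
      exact inv_anti₀ two_pos hM2
    have hb : ∀ p ∈ P.filter (fun p : ℕ => ¬ (p : ℝ) ≤ T), (1 - (p : ℝ) ^ (-σ))⁻¹
        ≤ Real.exp (2 * M⁻¹) := by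
      intro p hp
      have hp' := Finset.mem_filter.1 hp
      have hpT : T ≤ (p : ℝ) := le_of_not_ge hp'.2
      have hx0 : (0 : ℝ) < (p : ℝ) ^ (-σ) :=
        Real.rpow_pos_of_pos (by exact_mod_cast (hPprime p hp'.1).pos) _
      have hxM : (p : ℝ) ^ (-σ) ≤ M⁻¹ := by
        rw [← hTσ]
        exact Real.rpow_le_rpow_of_nonpos hT0 hpT (by linarith)
      set x := (p : ℝ) ^ (-σ)
      have hx12 : x ≤ 1 / 2 := hxM.trans hMinv
      have h1x : 0 < 1 - x := by linarith
      have hstep : (1 - x)⁻¹ ≤ 1 + 2 * x := by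
        rw [← one_div, div_le_iff₀ h1x]
        nlinarith
      calc (1 - x)⁻¹ ≤ 1 + 2 * x := hstep
        _ ≤ 1 + 2 * M⁻¹ := by linarith
        _ ≤ Real.exp (2 * M⁻¹) := by
            have := Real.add_one_le_exp (2 * M⁻¹)
            linarith
    calc ∏ p ∈ P.filter (fun p : ℕ => ¬ (p : ℝ) ≤ T), (1 - (p : ℝ) ^ (-σ))⁻¹
        ≤ Real.exp (2 * M⁻¹) ^ (P.filter (fun p : ℕ => ¬ (p : ℝ) ≤ T)).card := by
          rw [← Finset.prod_const]
          refine Finset.prod_le_prod (fun p hp => ?_) hb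
          exact inv_nonneg.2 (by linarith [hxlt p (Finset.mem_filter.1 hp).1])
      _ = Real.exp (2 * M⁻¹ * (P.filter (fun p : ℕ => ¬ (p : ℝ) ≤ T)).card) := by
          rw [← Real.exp_nat_mul, mul_comm]
      _ ≤ Real.exp (ε / 2 * Real.log y) := by
          apply Real.exp_le_exp.2
          have hcard' : ((P.filter (fun p : ℕ => ¬ (p : ℝ) ≤ T)).card : ℝ) ≤ C * Real.log y := by
            refine le_trans ?_ hcardE
            exact_mod_cast Finset.card_filter_le _ _
          have hMε : 2 * M⁻¹ * C ≤ ε / 2 := by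
            have h0 : (0 : ℝ) < 4 * C / ε := by positivity
            have h1 : 2 * M⁻¹ * C = 2 * C / M := by ring
            have h2 : 2 * C / M ≤ 2 * C / (4 * C / ε) :=
              div_le_div_of_nonneg_left (by positivity) h0 hMC
            have h3 : 2 * C / (4 * C / ε) = ε / 2 := by
              field_simp
              ring
            rw [h1]
            exact h2.trans_eq h3

          have h0 : (0 : ℝ) ≤ 2 * M⁻¹ := by positivity
          calc 2 * M⁻¹ * ((P.filter (fun p : ℕ => ¬ (p : ℝ) ≤ T)).card : ℝ)
              ≤ 2 * M⁻¹ * (C * Real.log y) := by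
                exact mul_le_mul_of_nonneg_left hcard' h0
            _ = 2 * M⁻¹ * C * Real.log y := by ring
            _ ≤ ε / 2 * Real.log y := mul_le_mul_of_nonneg_right hMε hlogy.le
      _ = y ^ (ε / 2) := by
          rw [Real.rpow_def_of_pos hy0, mul_comm]
  -- combine
  have hyBσ : (y ^ B) ^ σ = y ^ (ε / 2) := by
    rw [← Real.rpow_mul hy0.le]
    congr 1
    rw [hσdef]
    field_simp
  have hprod_split : ∏ p ∈ P, (1 - (p : ℝ) ^ (-σ))⁻¹
      = (∏ p ∈ P.filter (fun p : ℕ => (p : ℝ) ≤ T), (1 - (p : ℝ) ^ (-σ))⁻¹)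
        * ∏ p ∈ P.filter (fun p : ℕ => ¬ (p : ℝ) ≤ T), (1 - (p : ℝ) ^ (-σ))⁻¹ :=
    (Finset.prod_filter_mul_prod_filter_not P _ _).symm
  have hsmall0 : (0 : ℝ) ≤ ∏ p ∈ P.filter (fun p : ℕ => (p : ℝ) ≤ T), (1 - (p : ℝ) ^ (-σ))⁻¹ :=
    Finset.prod_nonneg fun p hp =>
      inv_nonneg.2 (by linarith [hxlt p (Finset.mem_filter.1 hp).1])
  have hbig0 : (0 : ℝ) ≤ ∏ p ∈ P.filter (fun p : ℕ => ¬ (p : ℝ) ≤ T), (1 - (p : ℝ) ^ (-σ))⁻¹ :=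
    Finset.prod_nonneg fun p hp =>
      inv_nonneg.2 (by linarith [hxlt p (Finset.mem_filter.1 hp).1])
  have hprod : ∏ p ∈ P, (1 - (p : ℝ) ^ (-σ))⁻¹ ≤ c0 ^ ⌊T⌋₊ * y ^ (ε / 2) := by
    rw [hprod_split]
    exact mul_le_mul hsmall hbig hbig0 (by positivity)
  have hsum0 : (0 : ℝ) ≤ ∑ n ∈ S, (n : ℝ) ^ (-σ) :=
    Finset.sum_nonneg fun n hn => Real.rpow_nonneg (by positivity) _
  have hyB0' : (0 : ℝ) ≤ (y ^ B) ^ σ := Real.rpow_nonneg hyB0 _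
  rw [hSeq]
  calc (S.card : ℝ) ≤ (y ^ B) ^ σ * ∑ n ∈ S, (n : ℝ) ^ (-σ) := step1
    _ ≤ (y ^ B) ^ σ * (c0 ^ ⌊T⌋₊ * y ^ (ε / 2)) :=
        mul_le_mul_of_nonneg_left (step2.trans hprod) hyB0'
    _ = c0 ^ ⌊T⌋₊ * (y ^ (ε / 2) * y ^ (ε / 2)) := by rw [hyBσ]; ring
    _ = c0 ^ ⌊T⌋₊ * y ^ ε := by
        rw [← Real.rpow_add hy0]
        norm_num
end

section
/- Let y ≥ 9, and let u, v be positive integers with u^2 > 16y^2 and u+v ≪ y^b. For integers t_1, f with √y ≤ t_1 ≤ 2√y and u ≤ f < u+v, set E = gcd(t_1^2-4, f) and R = ∏_{p | 2E} p^{ν_p(t_1^2-4)}. Then for every c > 0 there is d > 0 such that for any fixed f in the given range, the number of integers t_1 with √y ≤ t_1 ≤ 2√y and R ≥ y^c is O_{c,d}(y^{1/2-d}). -/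
open scoped Classical


lemma my_cast_pow_rpow (p j : ℕ) (θ : ℝ) :
    ((p^j : ℕ) : ℝ) ^ (-θ) = (((p:ℝ)) ^ (-θ))^j := by
  push_cast
  rw [← Real.rpow_natCast ((p:ℝ)^(-θ)) j, ← Real.rpow_mul (by positivity), mul_comm,
    Real.rpow_mul (by positivity), Real.rpow_natCast]


/-- geometric sum bound -/
lemma my_geom_le (x : ℝ) (h0 : 0 ≤ x) (h1 : x < 1) (n : ℕ) :
    ∑ i ∈ Finset.range n, x ^ i ≤ (1 - x)⁻¹ := by
  have h2 : 0 < 1 - x := by linarith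
  induction n with
  | zero => simp [inv_nonneg.mpr h2.le]
  | succ n ih =>
    rw [Finset.sum_range_succ']
    simp only [pow_succ, pow_zero]
    rw [← Finset.sum_mul]
    have hs : (∑ i ∈ Finset.range n, x ^ i) * x ≤ (1 - x)⁻¹ * x :=
      mul_le_mul_of_nonneg_right ih h0
    have : (1 - x)⁻¹ * x + 1 ≤ (1 - x)⁻¹ := by
      rw [← sub_nonneg]
      have h3 : (1 - x)⁻¹ - ((1 - x)⁻¹ * x + 1) = (1-x)⁻¹ * (1 - x) - 1 := by ring
      rw [h3, inv_mul_cancel₀ h2.ne']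
      norm_num
    linarith

lemma my_geom_le' (x : ℝ) (h0 : 0 ≤ x) (h1 : x ≤ 1/2) (n : ℕ) :
    ∑ i ∈ Finset.range (n+1), x ^ i ≤ 1 + 2 * x := by
  rw [Finset.sum_range_succ']
  simp only [pow_succ, pow_zero]
  rw [← Finset.sum_mul]
  have h2 : x < 1 := by linarith
  have := my_geom_le x h0 h2 n
  have hinv : (1 - x)⁻¹ ≤ 2 := by
    rw [inv_le_iff_one_le_mul₀ (by linarith)]
    linarith
  nlinarith [Finset.sum_nonneg (fun i (_ : i ∈ Finset.range n) => pow_nonneg h0 i)]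

/-- counting multiples in an interval -/
lemma count_dvd_le (l r w : ℤ) (s : ℕ) (hs : 0 < s) (hlr : l ≤ r) (hlw : 0 ≤ l + w) :
    (((Finset.Icc l r).filter (fun t => (s : ℤ) ∣ (t + w))).card : ℝ)
      ≤ ((r : ℝ) - l) / s + 2 := by
  have hs' : (0:ℤ) < (s:ℤ) := by exact_mod_cast hs
  have hsR : (0:ℝ) < (s:ℝ) := by exact_mod_cast hs
  set a : ℤ := (l+w)/(s:ℤ) with ha_def
  set e : ℤ := (r+w)/(s:ℤ) with he_def
  have hcard : ((Finset.Icc l r).filter (fun t => (s : ℤ) ∣ (t + w))).card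
      ≤ (Finset.Icc a e).card := by
    apply Finset.card_le_card_of_injOn (fun t => (t + w) / (s:ℤ))
    · intro t ht
      simp only [Finset.coe_filter, Finset.mem_coe, Set.mem_setOf_eq, Finset.mem_filter, Finset.mem_Icc] at ht ⊢
      obtain ⟨⟨h1, h2⟩, hdvd⟩ := ht
      exact ⟨Int.ediv_le_ediv hs' (by linarith), Int.ediv_le_ediv hs' (by linarith)⟩
    · intro p hp q hq hpq
      simp only [Finset.coe_filter, Set.mem_setOf_eq, Finset.mem_Icc] at hp hq
      have hpq' : (p + w) / (s:ℤ) = (q + w) / (s:ℤ) := hpq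
      have hp' := Int.ediv_mul_cancel hp.2
      have hq' := Int.ediv_mul_cancel hq.2
      have : (p + w) / (s:ℤ) * s = (q + w) / (s:ℤ) * s := by rw [hpq']
      rw [hp', hq'] at this
      linarith
  have hA : ((s:ℤ)) * e ≤ r + w := by
    have := Int.ediv_mul_le (r+w) hs'.ne'
    linarith
  have hB : l + w < (a + 1) * s := Int.lt_ediv_add_one_mul_self _ hs'
  have hAr : (e : ℝ) ≤ ((r:ℝ) + w) / s := by
    rw [le_div_iff₀ hsR]
    have h := hA
    have : ((s:ℤ) * e : ℤ) ≤ ((r + w : ℤ)) := hA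
    have hcast : ((s:ℝ)) * (e:ℝ) ≤ (r:ℝ) + (w:ℝ) := by exact_mod_cast this
    linarith
  have hBr : ((l:ℝ) + w) / s - 1 < (a : ℝ) := by
    have hcast : (l:ℝ) + w < ((a:ℝ) + 1) * s := by exact_mod_cast hB
    rw [div_sub_one hsR.ne', div_lt_iff₀ hsR]
    linarith
  have h2 : ((Finset.Icc a e).card : ℝ) ≤ ((r:ℝ) - l) / s + 2 := by
    rw [Int.card_Icc]
    have hsub : ((r:ℝ) + w) / s - (((l:ℝ) + w) / s) = ((r:ℝ) - l)/s := by
      rw [div_sub_div_same]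
      ring_nf
    have hrhs : (0:ℝ) ≤ ((r:ℝ) - l) / s + 2 := by
      have : (0:ℝ) ≤ ((r:ℝ) - l) / s := by
        apply div_nonneg _ hsR.le
        have : (l:ℝ) ≤ r := by exact_mod_cast hlr
        linarith
      linarith
    rcases le_or_gt (e + 1 - a) 0 with h | h
    · rw [Int.toNat_of_nonpos h]
      simpa using hrhs
    · have hcast : (((e + 1 - a).toNat : ℕ) : ℝ) = (e:ℝ) + 1 - (a:ℝ) := by
        have h1 : ((e + 1 - a).toNat : ℤ) = e + 1 - a := Int.toNat_of_nonneg h.le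
        exact_mod_cast h1
      rw [hcast]
      linarith
  calc (((Finset.Icc l r).filter (fun t => (s : ℤ) ∣ (t + w))).card : ℝ)
      ≤ ((Finset.Icc a e).card : ℝ) := by exact_mod_cast hcard
    _ ≤ _ := h2

/-- splitting a divisor sum over a product -/
lemma sum_divisors_mul_le (w : ℕ → ℝ) (hw0 : ∀ n, 0 ≤ w n)
    (hwm : ∀ a b : ℕ, w (a*b) = w a * w b) (m n : ℕ) (hm : m ≠ 0) (hn : n ≠ 0) :
    ∑ d ∈ (m*n).divisors, w d ≤ (∑ d ∈ m.divisors, w d) * (∑ d ∈ n.divisors, w d) := by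
  have key : ∀ d : ℕ, ∃ pq : ℕ × ℕ, d ∈ (m*n).divisors →
      pq.1 ∣ m ∧ pq.2 ∣ n ∧ pq.1 * pq.2 = d := by
    intro d
    by_cases hd : d ∈ (m*n).divisors
    · obtain ⟨x, y, hx, hy, hxy⟩ := Nat.dvd_mul.mp (Nat.mem_divisors.mp hd).1
      exact ⟨(x, y), fun _ => ⟨hx, hy, hxy⟩⟩
    · exact ⟨(1,1), fun h => absurd h hd⟩
  choose ψ hψ using key
  have hinj : ∀ x ∈ (m*n).divisors, ∀ y ∈ (m*n).divisors, ψ x = ψ y → x = y := by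
    intro x hx y hy hxy
    have h1 := (hψ x hx).2.2
    have h2 := (hψ y hy).2.2
    rw [← h1, ← h2, hxy]
  have step1 : ∑ d ∈ (m*n).divisors, w d
      = ∑ pq ∈ (m*n).divisors.image ψ, w (pq.1 * pq.2) := by
    rw [Finset.sum_image hinj]
    apply Finset.sum_congr rfl
    intro d hd
    rw [(hψ d hd).2.2]
  rw [step1]
  have step2 : ∑ pq ∈ (m*n).divisors.image ψ, w (pq.1 * pq.2)
      ≤ ∑ pq ∈ m.divisors ×ˢ n.divisors, w (pq.1 * pq.2) := by
    apply Finset.sum_le_sum_of_subset_of_nonneg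
    · intro pq hpq
      obtain ⟨d, hd, hd2⟩ := Finset.mem_image.mp hpq
      obtain ⟨h1, h2, _⟩ := hψ d hd
      rw [← hd2]
      exact Finset.mem_product.mpr ⟨Nat.mem_divisors.mpr ⟨h1, hm⟩, Nat.mem_divisors.mpr ⟨h2, hn⟩⟩
    · intro _ _ _; exact hw0 _
  refine step2.trans ?_
  rw [Finset.sum_mul_sum]
  rw [Finset.sum_product]
  apply le_of_eq
  apply Finset.sum_congr rfl
  intro x _
  apply Finset.sum_congr rfl
  intro z _
  exact hwm x z

lemma sum_divisors_prod_le (w : ℕ → ℝ) (hw0 : ∀ n, 0 ≤ w n)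
    (hwm : ∀ a b : ℕ, w (a*b) = w a * w b) (hw1 : w 1 = 1) (L : ℕ)
    (P : Finset ℕ) (hP : ∀ p ∈ P, p.Prime) :
    ∑ d ∈ (∏ p ∈ P, p^L).divisors, w d
      ≤ ∏ p ∈ P, ∑ j ∈ Finset.range (L+1), w (p^j) := by
  induction P using Finset.induction_on with
  | empty => simp [Nat.divisors_one, hw1]
  | @insert a P ha ih =>
    have hPa : ∀ p ∈ P, p.Prime := fun p hp => hP p (Finset.mem_insert_of_mem hp)
    have haprime : a.Prime := hP a (Finset.mem_insert_self a P)
    have hQ0 : (∏ p ∈ P, p^L) ≠ 0 := by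
      apply Finset.prod_ne_zero_iff.mpr
      intro p hp
      exact pow_ne_zero _ (hPa p hp).pos.ne'
    rw [Finset.prod_insert ha, Finset.prod_insert ha]
    calc ∑ d ∈ (a^L * ∏ p ∈ P, p^L).divisors, w d
        ≤ (∑ d ∈ (a^L).divisors, w d) * (∑ d ∈ (∏ p ∈ P, p^L).divisors, w d) :=
          sum_divisors_mul_le w hw0 hwm _ _ (pow_ne_zero _ haprime.pos.ne') hQ0
      _ ≤ (∑ j ∈ Finset.range (L+1), w (a^j)) * ∏ p ∈ P, ∑ j ∈ Finset.range (L+1), w (p^j) := by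
          rw [Nat.sum_divisors_prime_pow haprime]
          apply mul_le_mul_of_nonneg_left (ih hPa)
          exact Finset.sum_nonneg fun _ _ => hw0 _

/-- product of maximal prime powers over any finite set of primes divides n -/
lemma prod_pow_factorization_dvd (n : ℕ) (hn : n ≠ 0) (s : Finset ℕ) :
    ∏ p ∈ s, p ^ n.factorization p ∣ n := by
  have h1 : ∏ p ∈ s, p ^ n.factorization p
      = ∏ p ∈ s.filter (· ∈ n.primeFactors), p ^ n.factorization p := by
    rw [Finset.prod_filter]
    apply Finset.prod_congr rfl
    intro p _
    by_cases hp : p ∈ n.primeFactors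
    · simp [hp]
    · have : n.factorization p = 0 := by
        rw [← Finsupp.notMem_support_iff, Nat.support_factorization]
        exact hp
      simp [hp, this]
  rw [h1]
  have h2 : ∏ p ∈ s.filter (· ∈ n.primeFactors), p ^ n.factorization p
      ∣ ∏ p ∈ n.primeFactors, p ^ n.factorization p := by
    apply Finset.prod_dvd_prod_of_subset
    intro p hp
    exact (Finset.mem_filter.mp hp).2
  have h3 : ∏ p ∈ n.primeFactors, p ^ n.factorization p = n := by
    rw [← Nat.support_factorization]
    exact Nat.factorization_prod_pow_eq_self hn
  rw [h3] at h2
  exact h2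

/-- a number with prime factors in P and of size ≤ L divides ∏_{p∈P} p^L -/
lemma dvd_prod_pow_of_primeFactors_subset (s : ℕ) (hs : s ≠ 0) (P : Finset ℕ)
    (hsub : s.primeFactors ⊆ P) (L : ℕ) (hL : s ≤ L) :
    s ∣ ∏ p ∈ P, p ^ L := by
  have h1 : s = ∏ p ∈ s.primeFactors, p ^ s.factorization p := by
    rw [← Nat.support_factorization]
    exact (Nat.factorization_prod_pow_eq_self hs).symm
  calc s = ∏ p ∈ s.primeFactors, p ^ s.factorization p := h1
    _ ∣ ∏ p ∈ s.primeFactors, p ^ L := by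
        apply Finset.prod_dvd_prod_of_dvd
        intro p _
        exact pow_dvd_pow p ((Nat.factorization_lt p hs).le.trans hL)
    _ ∣ ∏ p ∈ P, p ^ L := Finset.prod_dvd_prod_of_subset _ _ _ hsub

/-- `Rval t1 f = ∏_{p ∣ 2·gcd(t1²-4, f)} p^{ν_p(t1²-4)}`. -/
noncomputable def Rval (t1 f : ℤ) : ℕ :=
  ∏ p ∈ (2 * Int.gcd (t1 ^ 2 - 4) f).primeFactors,
    p ^ padicValInt p (t1 ^ 2 - 4)

set_option maxHeartbeats 1000000 in
theorem stmt3 (b : ℝ) (hb : 0 < b) :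
    ∀ c : ℝ, 0 < c → ∃ d K : ℝ, 0 < d ∧ 0 < K ∧
      ∀ y : ℝ, 9 ≤ y → ∀ u v : ℕ, 0 < u → 0 < v →
        16 * y ^ 2 < (u : ℝ) ^ 2 → ((u : ℝ) + v) ≤ y ^ b →
        ∀ f : ℤ, (u : ℤ) ≤ f → f < (u : ℤ) + v →
          (((Finset.Icc ⌈Real.sqrt y⌉ ⌊2 * Real.sqrt y⌋).filter
              (fun t1 => y ^ c ≤ (Rval t1 f : ℝ))).card : ℝ)
            ≤ K * y ^ ((1 : ℝ) / 2 - d) := by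
  intro c hc
  set c' := min c (1/2) with hc'def
  have hc'0 : 0 < c' := lt_min hc one_half_pos
  have hc'le : c' ≤ 1/2 := min_le_right _ _
  have hc'c : c' ≤ c := min_le_left _ _
  set θ : ℝ := c'/4 with hθdef
  have hθ0 : 0 < θ := by positivity
  have hθ1 : θ ≤ 1 := by rw [hθdef]; linarith
  have hlog2 : 0 < Real.log 2 := Real.log_pos one_lt_two
  set δ : ℝ := min (1/2) (c' * Real.log 2 / (64 * (b+1))) with hδdef
  have hb1 : (0:ℝ) < 64 * (b+1) := by linarith
  have hδ0 : 0 < δ := by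
    apply lt_min one_half_pos
    positivity
  have hδhalf : δ ≤ 1/2 := min_le_left _ _
  have hδright : δ ≤ c' * Real.log 2 / (64 * (b+1)) := min_le_right _ _
  set T : ℕ := ⌈(1/δ) ^ ((1:ℝ)/θ)⌉₊ with hTdef
  have hrpos : (0:ℝ) < (1/δ) ^ ((1:ℝ)/θ) := Real.rpow_pos_of_pos (by positivity) _
  have hT1 : 1 ≤ T := Nat.ceil_pos.mpr hrpos
  set τ : ℝ := (T:ℝ) ^ (-θ) with hτdef
  have hτ0 : 0 ≤ τ := Real.rpow_nonneg (by positivity) _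
  have hτδ : τ ≤ δ := by
    have h1 : (1/δ) ^ ((1:ℝ)/θ) ≤ (T:ℝ) := Nat.le_ceil _
    have h2 : ((1/δ) ^ ((1:ℝ)/θ)) ^ θ ≤ (T:ℝ) ^ θ :=
      Real.rpow_le_rpow hrpos.le h1 hθ0.le
    have h3 : ((1/δ) ^ ((1:ℝ)/θ)) ^ θ = 1/δ := by
      rw [← Real.rpow_mul (by positivity), one_div θ, inv_mul_cancel₀ hθ0.ne',
        Real.rpow_one]
    rw [h3] at h2
    rw [hτdef, Real.rpow_neg (by positivity)]
    rw [inv_le_comm₀ (Real.rpow_pos_of_pos (by exact_mod_cast hT1 : (0:ℝ) < T) θ) hδ0]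
    rw [← one_div]
    exact h2
  set C0 : ℝ := (1 - (2:ℝ)^(-θ))⁻¹ with hC0def
  have h2θ : (2:ℝ)^(-θ) < 1 :=
    Real.rpow_lt_one_of_one_lt_of_neg one_lt_two (neg_lt_zero.mpr hθ0)
  have h2θ0 : 0 ≤ (2:ℝ)^(-θ) := Real.rpow_nonneg (by norm_num) _
  have hC0pos : 0 < C0 := by rw [hC0def]; rw [inv_pos]; linarith
  have hC01 : 1 ≤ C0 := by
    rw [hC0def]
    rw [one_le_inv_iff₀]
    constructor <;> [linarith; linarith]
  refine ⟨c'/4, 18 * C0^T, by positivity, by positivity, ?_⟩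
  intro y hy u v hu hv hu2 huv f hfl hfr
  have hy0 : (0:ℝ) < y := by linarith
  have hy1 : (1:ℝ) ≤ y := by linarith
  set sq := Real.sqrt y with hsqdef
  have hsq3 : 3 ≤ sq := by
    have h9 : Real.sqrt 9 ≤ sq := Real.sqrt_le_sqrt hy
    rw [show (9:ℝ) = 3^2 by norm_num, Real.sqrt_sq (by norm_num : (0:ℝ) ≤ 3)] at h9
    exact h9
  have hsq0 : 0 < sq := by linarith
  have hsqy : sq = y ^ ((1:ℝ)/2) := Real.sqrt_eq_rpow y
  set l : ℤ := ⌈sq⌉ with hldef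
  set r : ℤ := ⌊2*sq⌋ with hrdef
  have hlsq : sq ≤ (l:ℝ) := Int.le_ceil sq
  have hl3 : (3:ℤ) ≤ l := by exact_mod_cast hsq3.trans hlsq
  have hlsq1 : (l:ℝ) < sq + 1 := Int.ceil_lt_add_one sq
  have hrsq : (r:ℝ) ≤ 2*sq := Int.floor_le _
  have hr2 : 2*sq - 1 < (r:ℝ) := by
    have := Int.lt_floor_add_one (2*sq); linarith
  have hlr : l ≤ r := by
    have h1 : (l:ℝ) < (r:ℝ) + 1 := by linarith
    have h2 : l < r + 1 := by exact_mod_cast h1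
    omega
  -- f and its prime set
  have hf0 : (0:ℤ) < f := lt_of_lt_of_le (by exact_mod_cast hu) hfl
  set F : ℕ := 2 * f.natAbs with hFdef
  have hfa1 : 1 ≤ f.natAbs := by
    rw [Nat.one_le_iff_ne_zero, Int.natAbs_ne_zero]
    exact hf0.ne'
  have hF0 : F ≠ 0 := by positivity
  have hfR : (f.natAbs : ℝ) ≤ y ^ b := by
    have h3 : ((f.natAbs : ℕ) : ℝ) = (f:ℝ) := by
      rw [Nat.cast_natAbs]
      have : |f| = f := abs_of_nonneg hf0.le
      exact_mod_cast congrArg (Int.cast : ℤ → ℝ) this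
    have h2 : (f:ℝ) < (u:ℝ) + v := by exact_mod_cast hfr
    linarith
  set P := F.primeFactors with hPdef
  have hyb1 : (1:ℝ) ≤ y ^ b := by
    calc (1:ℝ) = y ^ (0:ℝ) := (Real.rpow_zero y).symm
    _ ≤ y ^ b := Real.rpow_le_rpow_of_exponent_le hy1 hb.le
  have hlogy : 1 ≤ Real.log y := by
    have h1 : Real.exp 1 ≤ y := by
      have := Real.exp_one_lt_d9
      linarith
    have h2 := Real.log_le_log (Real.exp_pos 1) h1
    rwa [Real.log_exp] at h2
  have hlog2le : Real.log 2 ≤ 1 := by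
    have h1 : (2:ℝ) ≤ Real.exp 1 := by
      have := Real.exp_one_gt_d9
      linarith
    have h2 := Real.log_le_log (by norm_num : (0:ℝ) < 2) h1
    rwa [Real.log_exp] at h2
  -- prime counting bounds
  have hPcard : (P.card : ℝ) * Real.log 2 ≤ Real.log F := by
    have h1 : 2 ^ P.card ≤ ∏ p ∈ P, p := by
      apply Finset.pow_card_le_prod
      intro p hp
      exact (Nat.prime_of_mem_primeFactors hp).two_le
    have h2 : ∏ p ∈ P, p ∣ F := Nat.prod_primeFactors_dvd F
    have h3 : (2:ℕ) ^ P.card ≤ F := h1.trans (Nat.le_of_dvd (Nat.pos_of_ne_zero hF0) h2)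
    have h4 : ((2:ℝ)) ^ P.card ≤ (F:ℝ) := by exact_mod_cast h3
    have h5 := Real.log_le_log (by positivity) h4
    rw [Real.log_pow] at h5
    linarith
  have hlogF : Real.log F ≤ (b+1) * Real.log y := by
    have h1 : (F:ℝ) ≤ 2 * y ^ b := by
      rw [hFdef]
      push_cast
      linarith
    have h2 := Real.log_le_log (by positivity) h1
    rw [Real.log_mul (by norm_num) (by positivity), Real.log_rpow hy0] at h2
    have h6 : Real.log 2 ≤ Real.log y := hlog2le.trans hlogy
    linarith
  have hlogF0 : 0 ≤ Real.log F := by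
    apply Real.log_nonneg
    have : (1:ℕ) ≤ F := Nat.one_le_iff_ne_zero.mpr hF0
    exact_mod_cast this
  -- the smooth modulus
  set M : ℕ := ⌊3 * sq⌋₊ with hMdef
  have hM3sq : (M:ℝ) ≤ 3 * sq := Nat.floor_le (by positivity)
  set Q : ℕ := ∏ p ∈ P, p ^ M with hQdef
  have hQ0 : Q ≠ 0 := by
    rw [hQdef]
    apply Finset.prod_ne_zero_iff.mpr
    intro p hp
    exact pow_ne_zero _ (Nat.prime_of_mem_primeFactors hp).pos.ne'
  set S : Finset ℕ := Q.divisors.filter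
      (fun s => y ^ (c'/2) ≤ (s:ℝ) ∧ s ≤ M) with hSdef
  set I : Finset ℤ := Finset.Icc l r with hIdef
  -- MAIN INCLUSION
  have hsubset : I.filter (fun t1 => y ^ c ≤ (Rval t1 f : ℝ)) ⊆
      S.biUnion (fun s => I.filter
        (fun t => (s:ℤ) ∣ (t + (-2)) ∨ (s:ℤ) ∣ (t + 2))) := by
    intro t1 ht1
    rw [Finset.mem_filter] at ht1
    obtain ⟨htI, htR⟩ := ht1
    have htlr := Finset.mem_Icc.mp htI
    have ht3 : (3:ℤ) ≤ t1 := hl3.trans htlr.1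
    have ht3R : (3:ℝ) ≤ (t1:ℝ) := by exact_mod_cast ht3
    have htr2 : (t1:ℝ) ≤ 2 * sq := by
      have : (t1:ℝ) ≤ (r:ℝ) := by exact_mod_cast htlr.2
      linarith
    set n : ℕ := (t1^2 - 4).natAbs with hndef
    have hn40 : t1^2 - 4 ≠ 0 := by nlinarith [sq_nonneg (t1 - 3)]
    have hn0 : n ≠ 0 := by
      rw [hndef, Int.natAbs_ne_zero]
      exact hn40
    have hR_eq : Rval t1 f
        = ∏ p ∈ (2 * Int.gcd (t1^2-4) f).primeFactors, p ^ n.factorization p := by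
      unfold Rval
      apply Finset.prod_congr rfl
      intro p hp
      congr 1
      rw [Nat.factorization_def n (Nat.prime_of_mem_primeFactors hp)]
      rfl
    set R : ℕ := Rval t1 f with hRdef
    have hRdvd : R ∣ n := by
      rw [hR_eq]
      exact prod_pow_factorization_dvd n hn0 _
    have hR0 : R ≠ 0 := by
      intro h
      rw [h] at hRdvd
      exact hn0 (zero_dvd_iff.mp hRdvd)
    have hgcd0 : (2 * Int.gcd (t1^2-4) f) ≠ 0 := by
      have hg : Int.gcd (t1^2-4) f ≠ 0 := fun h => hf0.ne' (Int.gcd_eq_zero_iff.mp h).2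
      exact Nat.mul_ne_zero (by norm_num) hg
    have h2E_dvd_F : 2 * Int.gcd (t1^2-4) f ∣ F := by
      rw [hFdef]
      exact mul_dvd_mul_left 2 (Nat.gcd_dvd_right _ _)
    have hRP : R.primeFactors ⊆ P := by
      intro q hq
      have hqp : q.Prime := Nat.prime_of_mem_primeFactors hq
      have hqR : q ∣ R := Nat.dvd_of_mem_primeFactors hq
      rw [hR_eq] at hqR
      obtain ⟨p, hp, hqdvd⟩ := hqp.prime.exists_mem_finset_dvd hqR
      have hpp : p.Prime := Nat.prime_of_mem_primeFactors hp
      have hqep : q = p :=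
        (Nat.prime_dvd_prime_iff_eq hqp hpp).mp (hqp.dvd_of_dvd_pow hqdvd)
      rw [hqep]
      exact Nat.primeFactors_mono h2E_dvd_F hF0 hp
    have hyc'R : y ^ c' ≤ (R:ℝ) := by
      calc y ^ c' ≤ y ^ c := Real.rpow_le_rpow_of_exponent_le hy1 hc'c
        _ ≤ (R:ℝ) := htR
    -- decompose
    set a1 : ℕ := (t1 - 2).natAbs with ha1def
    set b1 : ℕ := (t1 + 2).natAbs with hb1def
    have hab : n = a1 * b1 := by
      rw [hndef, ha1def, hb1def, ← Int.natAbs_mul]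
      congr 1
      ring
    have ha10 : a1 ≠ 0 := by
      rw [ha1def, Int.natAbs_ne_zero]
      omega
    have hb10 : b1 ≠ 0 := by
      rw [hb1def, Int.natAbs_ne_zero]
      omega
    have ha1R : ((a1:ℕ):ℝ) = (t1:ℝ) - 2 := by
      rw [ha1def, Nat.cast_natAbs, abs_of_nonneg (by push_cast; linarith)]
      push_cast; ring
    have hb1R : ((b1:ℕ):ℝ) = (t1:ℝ) + 2 := by
      rw [hb1def, Nat.cast_natAbs, abs_of_nonneg (by push_cast; linarith)]
      push_cast; ring
    obtain ⟨A, B, hAa, hBb, hABR⟩ := Nat.dvd_mul.mp (hab ▸ hRdvd)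
    have hA0 : A ≠ 0 := by
      intro h; rw [h] at hAa; exact ha10 (zero_dvd_iff.mp hAa)
    have hB0 : B ≠ 0 := by
      intro h; rw [h] at hBb; exact hb10 (zero_dvd_iff.mp hBb)
    have hABR' : (A:ℝ) * (B:ℝ) = (R:ℝ) := by exact_mod_cast hABR
    have hor : y ^ (c'/2) ≤ (A:ℝ) ∨ y ^ (c'/2) ≤ (B:ℝ) := by
      by_contra hcon
      push_neg at hcon
      have h1 : (A:ℝ) * (B:ℝ) < y ^ (c'/2) * y ^ (c'/2) := by
        apply mul_lt_mul'' hcon.1 hcon.2 (by positivity) (by positivity)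
      rw [← Real.rpow_add hy0] at h1
      have h2 : c'/2 + c'/2 = c' := by ring
      rw [h2, hABR'] at h1
      linarith
    have hAle : (A:ℝ) ≤ 3 * sq := by
      have h1 : A ≤ a1 := Nat.le_of_dvd (Nat.pos_of_ne_zero ha10) hAa
      have h2 : (A:ℝ) ≤ (a1:ℝ) := by exact_mod_cast h1
      rw [ha1R] at h2
      linarith
    have hBle : (B:ℝ) ≤ 3 * sq := by
      have h1 : B ≤ b1 := Nat.le_of_dvd (Nat.pos_of_ne_zero hb10) hBb
      have h2 : (B:ℝ) ≤ (b1:ℝ) := by exact_mod_cast h1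
      rw [hb1R] at h2
      linarith
    -- build the witness s
    have hmem : ∀ s : ℕ, s ≠ 0 → s ∣ R → (s:ℝ) ≤ 3 * sq → y ^ (c'/2) ≤ (s:ℝ) →
        s ∈ S := by
      intro s hs0 hsR hsle hsy
      rw [hSdef, Finset.mem_filter]
      have hsM : s ≤ M := Nat.le_floor hsle
      refine ⟨?_, hsy, hsM⟩
      rw [Nat.mem_divisors]
      refine ⟨?_, hQ0⟩
      rw [hQdef]
      apply dvd_prod_pow_of_primeFactors_subset s hs0 P _ M hsM
      exact (Nat.primeFactors_mono hsR hR0).trans hRP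
    rw [Finset.mem_biUnion]
    rcases hor with hA | hB
    · refine ⟨A, hmem A hA0 (Dvd.intro B hABR) hAle hA, ?_⟩
      rw [Finset.mem_filter]
      refine ⟨htI, Or.inl ?_⟩
      have h1 : (A:ℤ) ∣ (a1:ℤ) := Int.natCast_dvd_natCast.mpr hAa
      have h2 : (a1:ℤ) = t1 - 2 := Int.natAbs_of_nonneg (by omega)
      rw [h2] at h1
      have : t1 + (-2) = t1 - 2 := by ring
      rw [this]
      exact h1
    · refine ⟨B, hmem B hB0 (Dvd.intro_left A hABR) hBle hB, ?_⟩
      rw [Finset.mem_filter]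
      refine ⟨htI, Or.inr ?_⟩
      have h1 : (B:ℤ) ∣ (b1:ℤ) := Int.natCast_dvd_natCast.mpr hBb
      have h2 : (b1:ℤ) = t1 + 2 := Int.natAbs_of_nonneg (by omega)
      rw [h2] at h1
      exact h1
  -- counting
  set g : ℕ → Finset ℤ := fun s => I.filter
      (fun t => (s:ℤ) ∣ (t + (-2)) ∨ (s:ℤ) ∣ (t + 2)) with hgdef
  have hyE1 : (1:ℝ) ≤ y ^ ((1:ℝ)/2 - c'/2) := by
    calc (1:ℝ) = y ^ (0:ℝ) := (Real.rpow_zero y).symm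
      _ ≤ _ := Real.rpow_le_rpow_of_exponent_le hy1 (by linarith)
  have hcount1 : ((I.filter (fun t1 => y ^ c ≤ (Rval t1 f : ℝ))).card : ℝ)
      ≤ ∑ s ∈ S, ((g s).card : ℝ) := by
    have h1 := Finset.card_le_card hsubset
    have h2 := Finset.card_biUnion_le (s := S) (t := g)
    have h3 := h1.trans h2
    calc ((I.filter (fun t1 => y ^ c ≤ (Rval t1 f : ℝ))).card : ℝ)
        ≤ ((∑ s ∈ S, (g s).card : ℕ) : ℝ) := by exact_mod_cast h3
      _ = ∑ s ∈ S, ((g s).card : ℝ) := by push_cast; ring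
  have hgbound : ∀ s ∈ S, ((g s).card : ℝ) ≤ 6 * y ^ ((1:ℝ)/2 - c'/2) := by
    intro s hs
    rw [hSdef, Finset.mem_filter, Nat.mem_divisors] at hs
    obtain ⟨⟨hsQ, _⟩, hsy, hsM⟩ := hs
    have hspos : 0 < s := by
      rcases Nat.eq_zero_or_pos s with h | h
      · exfalso; rw [h] at hsQ; exact hQ0 (zero_dvd_iff.mp hsQ)
      · exact h
    have hsR : (0:ℝ) < (s:ℝ) := by exact_mod_cast hspos
    have hsplit : (g s).card ≤ ((I.filter (fun t => (s:ℤ) ∣ (t + (-2)))).card)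
        + ((I.filter (fun t => (s:ℤ) ∣ (t + 2))).card) := by
      rw [hgdef]
      simp only []
      rw [Finset.filter_or]
      exact Finset.card_union_le _ _
    have hc1 := count_dvd_le l r (-2) s hspos hlr (by omega)
    have hc2 := count_dvd_le l r 2 s hspos hlr (by omega)
    have hrl : (r:ℝ) - l ≤ sq := by linarith
    have hypos : (0:ℝ) < y ^ (c'/2) := Real.rpow_pos_of_pos hy0 _
    have hdiv : ((r:ℝ) - l)/s ≤ y ^ ((1:ℝ)/2 - c'/2) := by
      have h1 : ((r:ℝ) - l)/s ≤ sq / y ^ (c'/2) := by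
        apply div_le_div₀ (by linarith) hrl hypos hsy
      have h2 : sq / y ^ (c'/2) = y ^ ((1:ℝ)/2 - c'/2) := by
        rw [hsqy, ← Real.rpow_sub hy0]
      linarith
    have hcast : ((g s).card : ℝ)
        ≤ ((I.filter (fun t => (s:ℤ) ∣ (t + (-2)))).card : ℝ)
          + ((I.filter (fun t => (s:ℤ) ∣ (t + 2))).card : ℝ) := by
      exact_mod_cast hsplit
    rw [hIdef] at hcast
    linarith
  have hcount2 : ∑ s ∈ S, ((g s).card : ℝ)
      ≤ (S.card : ℝ) * (6 * y ^ ((1:ℝ)/2 - c'/2)) := by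
    have := Finset.sum_le_sum hgbound
    rw [Finset.sum_const, nsmul_eq_mul] at this
    exact this
  -- bounding S.card
  set w : ℕ → ℝ := fun d => (d:ℝ) ^ (-θ) with hwdef
  have hw0 : ∀ n : ℕ, 0 ≤ w n := fun n => Real.rpow_nonneg (Nat.cast_nonneg n) _
  have hwm : ∀ a b : ℕ, w (a*b) = w a * w b := by
    intro a b
    simp only [hwdef, Nat.cast_mul]
    exact Real.mul_rpow (Nat.cast_nonneg a) (Nat.cast_nonneg b)
  have hw1 : w 1 = 1 := by simp [hwdef]
  have hDiv : ∑ d ∈ Q.divisors, w d ≤ ∏ p ∈ P, ∑ j ∈ Finset.range (M+1), w (p^j) := by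
    rw [hQdef]
    exact sum_divisors_prod_le w hw0 hwm hw1 M P
      (fun p hp => Nat.prime_of_mem_primeFactors hp)
  have hFactor : ∀ p ∈ P, ∑ j ∈ Finset.range (M+1), w (p^j)
      ≤ if p ≤ T then C0 else 1 + 2*τ := by
    intro p hp
    have hpp := Nat.prime_of_mem_primeFactors hp
    have hp2 : (2:ℝ) ≤ (p:ℝ) := by exact_mod_cast hpp.two_le
    set x : ℝ := (p:ℝ)^(-θ) with hxdef
    have hx0 : 0 ≤ x := Real.rpow_nonneg (by linarith) _
    have hx2 : x ≤ (2:ℝ)^(-θ) := by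
      rw [hxdef, Real.rpow_neg (by linarith), Real.rpow_neg (by norm_num)]
      apply inv_anti₀ (Real.rpow_pos_of_pos (by norm_num) θ)
      exact Real.rpow_le_rpow (by norm_num) hp2 hθ0.le
    have hsum_eq : ∑ j ∈ Finset.range (M+1), w (p^j)
        = ∑ j ∈ Finset.range (M+1), x^j := by
      apply Finset.sum_congr rfl
      intro j _
      simp only [hwdef, hxdef]
      exact my_cast_pow_rpow p j θ
    rw [hsum_eq]
    by_cases hpT : p ≤ T
    · simp only [hpT, if_true]
      calc ∑ j ∈ Finset.range (M+1), x^j ≤ (1-x)⁻¹ :=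
            my_geom_le x hx0 (lt_of_le_of_lt hx2 h2θ) _
        _ ≤ C0 := by
            rw [hC0def]
            apply inv_anti₀ (by linarith) (by linarith)
    · simp only [hpT, if_false]
      have hTp : (T:ℝ) ≤ (p:ℝ) := by
        have : T ≤ p := (not_le.mp hpT).le
        exact_mod_cast this
      have hT0R : (0:ℝ) < (T:ℝ) := by exact_mod_cast hT1
      have hxτ : x ≤ τ := by
        rw [hxdef, hτdef, Real.rpow_neg (by linarith), Real.rpow_neg (by positivity)]
        apply inv_anti₀ (Real.rpow_pos_of_pos hT0R θ)
        exact Real.rpow_le_rpow (by positivity) hTp hθ0.le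
      have hx12 : x ≤ 1/2 := hxτ.trans (hτδ.trans hδhalf)
      calc ∑ j ∈ Finset.range (M+1), x^j ≤ 1 + 2*x := my_geom_le' x hx0 hx12 M
        _ ≤ 1 + 2*τ := by linarith
  have hProdIte : ∏ p ∈ P, (if p ≤ T then C0 else 1 + 2*τ)
      ≤ C0^T * Real.exp ((P.card : ℝ) * (2*τ)) := by
    rw [Finset.prod_ite, Finset.prod_const, Finset.prod_const]
    have hcard1 : (P.filter (fun p => p ≤ T)).card ≤ T := by
      have hsub2 : P.filter (fun p => p ≤ T) ⊆ Finset.Icc 2 T := by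
        intro p hp'
        rw [Finset.mem_filter] at hp'
        rw [Finset.mem_Icc]
        exact ⟨(Nat.prime_of_mem_primeFactors hp'.1).two_le, hp'.2⟩
      calc (P.filter (fun p => p ≤ T)).card ≤ (Finset.Icc 2 T).card :=
            Finset.card_le_card hsub2
        _ = T + 1 - 2 := Nat.card_Icc 2 T
        _ ≤ T := by omega
    have h1 : C0 ^ (P.filter (fun p => p ≤ T)).card ≤ C0 ^ T :=
      pow_le_pow_right₀ hC01 hcard1
    have h2 : (1+2*τ) ^ (P.filter (fun p => ¬ p ≤ T)).card ≤ (1+2*τ) ^ P.card :=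
      pow_le_pow_right₀ (by linarith) (Finset.card_filter_le _ _)
    have h3 : (1+2*τ) ^ P.card ≤ Real.exp (2*τ) ^ P.card := by
      apply pow_le_pow_left₀ (by linarith)
      have := Real.add_one_le_exp (2*τ)
      linarith
    have h4 : Real.exp (2*τ) ^ P.card = Real.exp ((P.card : ℝ) * (2*τ)) :=
      (Real.exp_nat_mul _ _).symm
    exact mul_le_mul h1 (h2.trans (h3.trans_eq h4)) (by positivity) (by positivity)
  have hexp : Real.exp ((P.card:ℝ) * (2*τ)) ≤ y ^ (c'/32) := by
    have hPc : (P.card:ℝ) ≤ Real.log F / Real.log 2 := by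
      rw [le_div_iff₀ hlog2]
      exact hPcard
    have hlF2 : 0 ≤ Real.log F / Real.log 2 := div_nonneg hlogF0 hlog2.le
    have h1 : (P.card:ℝ) * (2*τ) ≤ (Real.log F / Real.log 2) * (2*δ) :=
      mul_le_mul hPc (by linarith) (by linarith) hlF2
    have h2 : (Real.log F / Real.log 2) * (2*δ)
        ≤ ((b+1) * Real.log y / Real.log 2) * (2 * (c' * Real.log 2 / (64*(b+1)))) := by
      apply mul_le_mul
      · gcongr
      · linarith
      · linarith
      · positivity
    have h3 : ((b+1) * Real.log y / Real.log 2) * (2 * (c' * Real.log 2 / (64*(b+1))))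
        = c' * Real.log y / 32 := by
      field_simp
      ring
    have h4 : Real.exp ((P.card:ℝ)*(2*τ)) ≤ Real.exp (c' * Real.log y / 32) := by
      apply Real.exp_le_exp.mpr
      rw [h3] at h2
      linarith
    rw [Real.rpow_def_of_pos hy0]
    have h5 : Real.log y * (c'/32) = c' * Real.log y / 32 := by ring
    rw [h5]
    exact h4
  have hSsum : ∑ s ∈ S, w s ≤ C0^T * y^(c'/32) := by
    have h0 : ∑ s ∈ S, w s ≤ ∑ d ∈ Q.divisors, w d :=
      Finset.sum_le_sum_of_subset_of_nonneg (Finset.filter_subset _ _)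
        (fun i _ _ => hw0 i)
    have h1 : ∏ p ∈ P, ∑ j ∈ Finset.range (M+1), w (p^j)
        ≤ ∏ p ∈ P, (if p ≤ T then C0 else 1+2*τ) := by
      apply Finset.prod_le_prod
      · intro p _
        exact Finset.sum_nonneg fun j _ => hw0 _
      · exact hFactor
    have h2 : C0^T * Real.exp ((P.card:ℝ) * (2*τ)) ≤ C0^T * y^(c'/32) :=
      mul_le_mul_of_nonneg_left hexp (by positivity)
    linarith
  have hScard : (S.card : ℝ) ≤ 3 * y ^ (θ/2) * (C0^T * y^(c'/32)) := by
    have h1 : (S.card : ℝ) = ∑ _s ∈ S, (1:ℝ) := by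
      rw [Finset.sum_const, nsmul_eq_mul, mul_one]
    have h2 : ∀ s ∈ S, (1:ℝ) ≤ (3*sq)^θ * w s := by
      intro s hs
      rw [hSdef, Finset.mem_filter, Nat.mem_divisors] at hs
      obtain ⟨⟨hsQ, _⟩, hsy, hsM⟩ := hs
      have hspos : 0 < s := by
        rcases Nat.eq_zero_or_pos s with h | h
        · exfalso; rw [h] at hsQ; exact hQ0 (zero_dvd_iff.mp hsQ)
        · exact h
      have hsR : (0:ℝ) < (s:ℝ) := by exact_mod_cast hspos
      have hs3sq : (s:ℝ) ≤ 3*sq := by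
        have : (s:ℝ) ≤ (M:ℝ) := by exact_mod_cast hsM
        linarith
      have hsθ : (s:ℝ)^θ ≤ (3*sq)^θ := Real.rpow_le_rpow hsR.le hs3sq hθ0.le
      have hsθpos : (0:ℝ) < (s:ℝ)^θ := Real.rpow_pos_of_pos hsR θ
      have hws : w s = ((s:ℝ)^θ)⁻¹ := by
        simp only [hwdef]
        rw [Real.rpow_neg hsR.le]
      rw [hws, ← div_eq_mul_inv]
      exact (one_le_div hsθpos).mpr hsθ
    have h3 : ∑ s ∈ S, ((3*sq)^θ * w s) = (3*sq)^θ * ∑ s ∈ S, w s :=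
      (Finset.mul_sum _ _ _).symm
    have h4 : ((3:ℝ)*sq)^θ ≤ 3 * y^(θ/2) := by
      rw [Real.mul_rpow (by norm_num) hsq0.le]
      have h5 : (3:ℝ)^θ ≤ 3 := by
        calc (3:ℝ)^θ ≤ (3:ℝ)^(1:ℝ) :=
              Real.rpow_le_rpow_of_exponent_le (by norm_num) hθ1
          _ = 3 := Real.rpow_one 3
      have h6 : sq^θ = y^(θ/2) := by
        rw [hsqy, ← Real.rpow_mul hy0.le]
        congr 1
        ring
      rw [h6]
      exact mul_le_mul_of_nonneg_right h5 (Real.rpow_nonneg hy0.le _)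
    have h7 : (S.card : ℝ) ≤ (3*sq)^θ * ∑ s ∈ S, w s := by
      rw [h1, ← h3]
      exact Finset.sum_le_sum h2
    have h8 : (3*sq:ℝ)^θ * ∑ s ∈ S, w s ≤ (3*sq)^θ * (C0^T * y^(c'/32)) :=
      mul_le_mul_of_nonneg_left hSsum (Real.rpow_nonneg (by positivity) _)
    have h9 : ((3:ℝ)*sq)^θ * (C0^T * y^(c'/32)) ≤ 3 * y^(θ/2) * (C0^T * y^(c'/32)) :=
      mul_le_mul_of_nonneg_right h4 (by positivity)
    linarith
  -- final combination
  have hfin1 : ((I.filter (fun t1 => y ^ c ≤ (Rval t1 f : ℝ))).card : ℝ)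
      ≤ 3 * y ^ (θ/2) * (C0^T * y^(c'/32)) * (6 * y ^ ((1:ℝ)/2 - c'/2)) := by
    have := hcount1.trans hcount2
    have hmul : (S.card : ℝ) * (6 * y ^ ((1:ℝ)/2 - c'/2))
        ≤ 3 * y ^ (θ/2) * (C0^T * y^(c'/32)) * (6 * y ^ ((1:ℝ)/2 - c'/2)) := by
      apply mul_le_mul_of_nonneg_right hScard (by positivity)
    linarith
  have hfin2 : 3 * y ^ (θ/2) * (C0^T * y^(c'/32)) * (6 * y ^ ((1:ℝ)/2 - c'/2))
      = 18 * C0^T * (y ^ (θ/2) * y^(c'/32) * y ^ ((1:ℝ)/2 - c'/2)) := by ring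
  have hfin3 : y ^ (θ/2) * y^(c'/32) * y ^ ((1:ℝ)/2 - c'/2)
      = y ^ (θ/2 + c'/32 + ((1:ℝ)/2 - c'/2)) := by
    rw [← Real.rpow_add hy0, ← Real.rpow_add hy0]
  have hfin4 : y ^ (θ/2 + c'/32 + ((1:ℝ)/2 - c'/2)) ≤ y ^ ((1:ℝ)/2 - c'/4) := by
    apply Real.rpow_le_rpow_of_exponent_le hy1
    rw [hθdef]
    linarith
  calc ((I.filter (fun t1 => y ^ c ≤ (Rval t1 f : ℝ))).card : ℝ)
      ≤ (3 * y ^ (θ/2) * (C0^T * y^(c'/32)) * (6 * y ^ ((1:ℝ)/2 - c'/2)) : ℝ) := hfin1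
    _ = 18 * C0^T * (y ^ (θ/2) * y^(c'/32) * y ^ ((1:ℝ)/2 - c'/2)) := hfin2
    _ ≤ 18 * C0^T * y ^ ((1:ℝ)/2 - c'/4) := by
        rw [hfin3]
        exact mul_le_mul_of_nonneg_left hfin4 (by positivity)
end

section
/- Let t_1, t_2, f be positive integers with t_1, t_2 > 2 and f^2 > (t_1^2-4)(t_2^2-4), and let p be a prime. Set β_p = ν_p(f^2 - (t_1^2-4)(t_2^2-4)). Then the Hilbert symbol (t_2^2-4, f^2-(t_1^2-4)(t_2^2-4))_p over Q_p is determined by the residues of t_1, t_2 and f modulo p^{β_p + 1 + ν_p(16)}; i.e., if (t_1', t_2', f') is another such triple with the same value of β_p and with t_1' ≡ t_1, t_2' ≡ t_2, f' ≡ f mod p^{β_p+1+ν_p(16)}, then the corresponding Hilbert symbols agree. -/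
open scoped Classical

/-- The `p`-adic Hilbert symbol: `1` if `a x² + b y² = z²` has a nontrivial
solution in `ℚ_p`, and `-1` otherwise. -/
noncomputable def hilbertSym (p : ℕ) [Fact p.Prime] (a b : ℚ_[p]) : ℤ :=
  if ∃ x y z : ℚ_[p], ¬(x = 0 ∧ y = 0 ∧ z = 0) ∧ a * x ^ 2 + b * y ^ 2 = z ^ 2
  then 1 else -1

section Aux
variable {p : ℕ} [Fact p.Prime]

private lemma sol_mul {a b : ℚ_[p]} (s t : ℚ_[p]) (hs : s ≠ 0) (ht : t ≠ 0)
    (h : ∃ x y z : ℚ_[p], ¬(x = 0 ∧ y = 0 ∧ z = 0) ∧ a * x ^ 2 + b * y ^ 2 = z ^ 2) :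
    ∃ x y z : ℚ_[p], ¬(x = 0 ∧ y = 0 ∧ z = 0) ∧
      (a * s ^ 2) * x ^ 2 + (b * t ^ 2) * y ^ 2 = z ^ 2 := by
  obtain ⟨x, y, z, hnt, he⟩ := h
  refine ⟨x / s, y / t, z, ?_, ?_⟩
  · rintro ⟨hx, hy, hz⟩
    refine hnt ⟨?_, ?_, hz⟩
    · rwa [div_eq_zero_iff, or_iff_left hs] at hx
    · rwa [div_eq_zero_iff, or_iff_left ht] at hy
  · have h1 : (a * s ^ 2) * (x / s) ^ 2 = a * x ^ 2 := by field_simp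
    have h2 : (b * t ^ 2) * (y / t) ^ 2 = b * y ^ 2 := by field_simp
    rw [h1, h2]; exact he

private lemma hilb_mul_sq {a b : ℚ_[p]} (s t : ℚ_[p]) (hs : s ≠ 0) (ht : t ≠ 0) :
    hilbertSym p (a * s ^ 2) (b * t ^ 2) = hilbertSym p a b := by
  unfold hilbertSym
  congr 1
  apply propext
  constructor
  · intro h
    have := sol_mul s⁻¹ t⁻¹ (inv_ne_zero hs) (inv_ne_zero ht) h
    have e1 : a * s ^ 2 * s⁻¹ ^ 2 = a := by field_simp
    have e2 : b * t ^ 2 * t⁻¹ ^ 2 = b := by field_simp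
    rwa [e1, e2] at this
  · exact sol_mul s t hs ht

private lemma hilb_one (a : ℚ_[p]) {b : ℚ_[p]} (w : ℚ_[p]) (hw : w ^ 2 = b) :
    hilbertSym p a b = 1 := by
  unfold hilbertSym
  rw [if_pos ⟨0, 1, w, by simp, by simp [hw]⟩]

private lemma sq_of_close {c : ℚ_[p]} (h : ‖c - 1‖ < ‖(2 : ℚ_[p])‖ ^ 2) :
    ∃ w : ℚ_[p], w ^ 2 = c := by
  have h2le : ‖(2 : ℚ_[p])‖ ≤ 1 := by
    simpa using Padic.norm_int_le_one (p := p) 2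
  have hlt1 : ‖c - 1‖ < 1 :=
    lt_of_lt_of_le h (by nlinarith [norm_nonneg (2 : ℚ_[p])])
  have hc1 : ‖c‖ ≤ 1 := by
    have : c = (c - 1) + 1 := by ring
    rw [this]
    refine le_trans (Padic.nonarchimedean _ _) ?_
    simp [le_of_lt hlt1]
  set C : ℤ_[p] := ⟨c, hc1⟩ with hC
  set F : Polynomial ℤ_[p] := Polynomial.X ^ 2 - Polynomial.C C with hF
  have hev : F.eval 1 = 1 - C := by simp [hF]
  have hder : F.derivative.eval 1 = 2 := by
    simp [hF, Polynomial.derivative_pow]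
  have hnorm : ‖F.eval 1‖ < ‖F.derivative.eval 1‖ ^ 2 := by
    rw [hev, hder]
    have e1 : ‖(1 - C : ℤ_[p])‖ = ‖c - 1‖ := by
      rw [PadicInt.norm_def]
      push_cast
      rw [norm_sub_rev]
    have e2 : ‖(2 : ℤ_[p])‖ = ‖(2 : ℚ_[p])‖ := by
      rw [PadicInt.norm_def]; norm_cast
    rw [e1, e2]; exact h
  obtain ⟨z, hz, -⟩ := hensels_lemma hnorm
  refine ⟨(z : ℚ_[p]), ?_⟩
  have hzC : z ^ 2 = C := by
    have := hz
    simp [hF, sub_eq_zero] at this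
    exact this
  calc ((z : ℚ_[p])) ^ 2 = ((z ^ 2 : ℤ_[p]) : ℚ_[p]) := by push_cast; ring
    _ = c := by rw [hzC]

private lemma norm_int_cast (m : ℤ) (hm : m ≠ 0) :
    ‖(m : ℚ_[p])‖ = (p : ℝ) ^ (-(padicValInt p m : ℤ)) := by
  rw [Padic.norm_eq_zpow_neg_valuation (by exact_mod_cast hm), Padic.valuation_intCast]

private lemma two_norm_sq :
    ‖(2 : ℚ_[p])‖ ^ 2 = (p : ℝ) ^ (-(2 * (padicValNat p 2 : ℤ))) := by
  have h2 : ((2 : ℚ_[p])) = ((2 : ℤ) : ℚ_[p]) := by norm_num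
  rw [h2, norm_int_cast 2 (by norm_num)]
  rw [← zpow_natCast ((p : ℝ) ^ (-(padicValInt p 2 : ℤ))) 2, ← zpow_mul]
  have hv : padicValInt p 2 = padicValNat p 2 := by simp [padicValInt]
  rw [hv]
  ring_nf

private lemma hilb_eq_one_of_small (A B C f : ℤ) (hf0 : (f : ℚ_[p]) ≠ 0)
    (hrel : B = f ^ 2 - C * A) (β : ℤ)
    (hB : ‖(B : ℚ_[p])‖ = (p : ℝ) ^ (-β))
    (hA : ‖(A : ℚ_[p])‖ ≤ (p : ℝ) ^ (-β - 2 * (padicValNat p 2 : ℤ) - 1)) :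
    hilbertSym p (A : ℚ_[p]) (B : ℚ_[p]) = 1 := by
  have hp1 : (1 : ℝ) < p := by exact_mod_cast (Fact.out : p.Prime).one_lt
  have hp0 : (0 : ℝ) < p := lt_trans one_pos hp1
  set ν : ℤ := (padicValNat p 2 : ℤ) with hν
  have hCA : ‖((C : ℚ_[p])) * (A : ℚ_[p])‖ ≤ (p : ℝ) ^ (-β - 2 * ν - 1) := by
    rw [norm_mul]
    calc ‖(C : ℚ_[p])‖ * ‖(A : ℚ_[p])‖ ≤ 1 * ((p : ℝ) ^ (-β - 2 * ν - 1)) :=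
          mul_le_mul (Padic.norm_int_le_one C) hA (norm_nonneg _) zero_le_one
      _ = (p : ℝ) ^ (-β - 2 * ν - 1) := one_mul _
  have hlt : (p : ℝ) ^ (-β - 2 * ν - 1) < (p : ℝ) ^ (-β) := by
    apply (zpow_lt_zpow_iff_right₀ hp1).2
    have : (0:ℤ) ≤ ν := Int.ofNat_nonneg _
    linarith
  have hCAB : ‖((C : ℚ_[p])) * (A : ℚ_[p])‖ < ‖(B : ℚ_[p])‖ := by
    rw [hB]; exact lt_of_le_of_lt hCA hlt
  have hf2 : ((f : ℚ_[p])) ^ 2 = (B : ℚ_[p]) + (C : ℚ_[p]) * (A : ℚ_[p]) := by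
    rw [hrel]; push_cast; ring
  have hnf : ‖((f : ℚ_[p])) ^ 2‖ = (p : ℝ) ^ (-β) := by
    rw [hf2, Padic.add_eq_max_of_ne (ne_of_lt hCAB).symm,
      max_eq_left (le_of_lt hCAB), hB]
  have hf2ne : ((f : ℚ_[p])) ^ 2 ≠ 0 := pow_ne_zero _ hf0
  have hclose : ‖(B : ℚ_[p]) / ((f : ℚ_[p])) ^ 2 - 1‖ < ‖(2 : ℚ_[p])‖ ^ 2 := by
    have hd : (B : ℚ_[p]) / ((f : ℚ_[p])) ^ 2 - 1
        = -((C : ℚ_[p]) * (A : ℚ_[p])) / ((f : ℚ_[p])) ^ 2 := by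
      rw [div_sub_one hf2ne, hf2]
      ring_nf
    rw [hd, norm_div, norm_neg, hnf, two_norm_sq, ← hν]
    rw [div_lt_iff₀ (by positivity), ← zpow_add₀ (ne_of_gt hp0)]
    refine lt_of_le_of_lt hCA ?_
    exact (zpow_lt_zpow_iff_right₀ hp1).2 (by linarith)
  obtain ⟨w, hw⟩ := sq_of_close hclose
  refine hilb_one _ ((f : ℚ_[p]) * w) ?_
  have he : ((f : ℚ_[p]) * w) ^ 2 = (f : ℚ_[p]) ^ 2 * ((B : ℚ_[p]) / (f : ℚ_[p]) ^ 2) := by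
    rw [← hw]; ring
  rw [he]; field_simp

end Aux

theorem stmt4 (p : ℕ) [Fact p.Prime]
    (t1 t2 f t1' t2' f' : ℤ)
    (h1 : 2 < t1) (h2 : 2 < t2) (hf : 0 < f)
    (h1' : 2 < t1') (h2' : 2 < t2') (hf' : 0 < f')
    (hpos : (t1 ^ 2 - 4) * (t2 ^ 2 - 4) < f ^ 2)
    (hpos' : (t1' ^ 2 - 4) * (t2' ^ 2 - 4) < f' ^ 2)
    (β : ℕ) (hβ : β = padicValInt p (f ^ 2 - (t1 ^ 2 - 4) * (t2 ^ 2 - 4)))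
    (hβ' : β = padicValInt p (f' ^ 2 - (t1' ^ 2 - 4) * (t2' ^ 2 - 4)))
    (hc1 : t1 ≡ t1' [ZMOD (p : ℤ) ^ (β + 1 + padicValNat p 16)])
    (hc2 : t2 ≡ t2' [ZMOD (p : ℤ) ^ (β + 1 + padicValNat p 16)])
    (hc3 : f ≡ f' [ZMOD (p : ℤ) ^ (β + 1 + padicValNat p 16)]) :
    hilbertSym p ((t2 ^ 2 - 4 : ℤ) : ℚ_[p])
        ((f ^ 2 - (t1 ^ 2 - 4) * (t2 ^ 2 - 4) : ℤ) : ℚ_[p])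
      = hilbertSym p ((t2' ^ 2 - 4 : ℤ) : ℚ_[p])
        ((f' ^ 2 - (t1' ^ 2 - 4) * (t2' ^ 2 - 4) : ℤ) : ℚ_[p]) := by
  have hp1 : (1 : ℝ) < p := by exact_mod_cast (Fact.out : p.Prime).one_lt
  have hp0 : (0 : ℝ) < p := lt_trans one_pos hp1
  have hpne : (p : ℝ) ≠ 0 := ne_of_gt hp0
  set ν : ℤ := (padicValNat p 2 : ℤ) with hν
  have hν0 : (0:ℤ) ≤ ν := Int.ofNat_nonneg _
  set N : ℕ := β + 1 + padicValNat p 16 with hN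
  have h16 : padicValNat p 16 = 4 * padicValNat p 2 := by
    rw [show (16 : ℕ) = 2 ^ 4 by norm_num, padicValNat.pow 2 4]
  have hNz : (N : ℤ) = (β : ℤ) + 1 + 4 * ν := by rw [hN, h16, hν]; push_cast; ring
  -- nonvanishing
  have hA0 : t2 ^ 2 - 4 ≠ 0 := by nlinarith
  have hA0' : t2' ^ 2 - 4 ≠ 0 := by nlinarith
  have hB0 : f ^ 2 - (t1 ^ 2 - 4) * (t2 ^ 2 - 4) ≠ 0 := ne_of_gt (by linarith)
  have hB0' : f' ^ 2 - (t1' ^ 2 - 4) * (t2' ^ 2 - 4) ≠ 0 := ne_of_gt (by linarith)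
  have hf0 : ((f : ℤ) : ℚ_[p]) ≠ 0 := Int.cast_ne_zero.2 (ne_of_gt hf)
  have hf0' : ((f' : ℤ) : ℚ_[p]) ≠ 0 := Int.cast_ne_zero.2 (ne_of_gt hf')
  have hAQ : ((t2 ^ 2 - 4 : ℤ) : ℚ_[p]) ≠ 0 := Int.cast_ne_zero.2 hA0
  have hAQ' : ((t2' ^ 2 - 4 : ℤ) : ℚ_[p]) ≠ 0 := Int.cast_ne_zero.2 hA0'
  have hBQ : ((f ^ 2 - (t1 ^ 2 - 4) * (t2 ^ 2 - 4) : ℤ) : ℚ_[p]) ≠ 0 := Int.cast_ne_zero.2 hB0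
  have hBQ' : ((f' ^ 2 - (t1' ^ 2 - 4) * (t2' ^ 2 - 4) : ℤ) : ℚ_[p]) ≠ 0 := Int.cast_ne_zero.2 hB0'
  -- norms of B, B'
  have hBnorm : ‖((f ^ 2 - (t1 ^ 2 - 4) * (t2 ^ 2 - 4) : ℤ) : ℚ_[p])‖ = (p : ℝ) ^ (-(β : ℤ)) := by
    rw [norm_int_cast _ hB0, ← hβ]
  have hBnorm' : ‖((f' ^ 2 - (t1' ^ 2 - 4) * (t2' ^ 2 - 4) : ℤ) : ℚ_[p])‖ = (p : ℝ) ^ (-(β : ℤ)) := by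
    rw [norm_int_cast _ hB0', ← hβ']
  -- congruence facts
  have hAd : ((p : ℤ) ^ N) ∣ ((t2' ^ 2 - 4) - (t2 ^ 2 - 4)) :=
    ((hc2.pow 2).sub (Int.ModEq.refl 4)).dvd
  have hBd : ((p : ℤ) ^ N) ∣
      ((f' ^ 2 - (t1' ^ 2 - 4) * (t2' ^ 2 - 4)) - (f ^ 2 - (t1 ^ 2 - 4) * (t2 ^ 2 - 4))) :=
    ((hc3.pow 2).sub (((hc1.pow 2).sub (Int.ModEq.refl 4)).mul
      ((hc2.pow 2).sub (Int.ModEq.refl 4)))).dvd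
  have hAdn : ‖((((t2' ^ 2 - 4) - (t2 ^ 2 - 4)) : ℤ) : ℚ_[p])‖ ≤ (p : ℝ) ^ (-(N : ℤ)) := by
    have := (Padic.norm_int_le_pow_iff_dvd (p := p)
      ((t2' ^ 2 - 4) - (t2 ^ 2 - 4)) N).2 hAd
    exact_mod_cast this
  have hBdn : ‖((((f' ^ 2 - (t1' ^ 2 - 4) * (t2' ^ 2 - 4))
      - (f ^ 2 - (t1 ^ 2 - 4) * (t2 ^ 2 - 4))) : ℤ) : ℚ_[p])‖ ≤ (p : ℝ) ^ (-(N : ℤ)) := by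
    have := (Padic.norm_int_le_pow_iff_dvd (p := p) _ N).2 hBd
    exact_mod_cast this
  by_cases hcase : (p : ℝ) ^ (-(β : ℤ) - 2 * ν) ≤ ‖((t2 ^ 2 - 4 : ℤ) : ℚ_[p])‖
  · -- small valuation case: both ratios are squares
    have hApos : (0:ℝ) < ‖((t2 ^ 2 - 4 : ℤ) : ℚ_[p])‖ := norm_pos_iff.2 hAQ
    have hBpos : (0:ℝ) < ‖((f ^ 2 - (t1 ^ 2 - 4) * (t2 ^ 2 - 4) : ℤ) : ℚ_[p])‖ :=
      norm_pos_iff.2 hBQ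
    have hcloseA : ‖((t2' ^ 2 - 4 : ℤ) : ℚ_[p]) / ((t2 ^ 2 - 4 : ℤ) : ℚ_[p]) - 1‖
        < ‖(2 : ℚ_[p])‖ ^ 2 := by
      have hd : ((t2' ^ 2 - 4 : ℤ) : ℚ_[p]) / ((t2 ^ 2 - 4 : ℤ) : ℚ_[p]) - 1
          = ((((t2' ^ 2 - 4) - (t2 ^ 2 - 4)) : ℤ) : ℚ_[p]) / ((t2 ^ 2 - 4 : ℤ) : ℚ_[p]) := by
        have hca : ((((t2' ^ 2 - 4) - (t2 ^ 2 - 4)) : ℤ) : ℚ_[p])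
            = ((t2' ^ 2 - 4 : ℤ) : ℚ_[p]) - ((t2 ^ 2 - 4 : ℤ) : ℚ_[p]) := Int.cast_sub _ _
        rw [hca, sub_div, div_self hAQ]
      rw [hd, norm_div, two_norm_sq, ← hν, div_lt_iff₀ hApos]
      calc ‖((((t2' ^ 2 - 4) - (t2 ^ 2 - 4)) : ℤ) : ℚ_[p])‖ ≤ (p : ℝ) ^ (-(N : ℤ)) := hAdn
        _ < (p : ℝ) ^ (-(2 * ν)) * (p : ℝ) ^ (-(β : ℤ) - 2 * ν) := by
            rw [← zpow_add₀ hpne]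
            exact (zpow_lt_zpow_iff_right₀ hp1).2 (by rw [hNz]; linarith)
        _ ≤ (p : ℝ) ^ (-(2 * ν)) * ‖((t2 ^ 2 - 4 : ℤ) : ℚ_[p])‖ := by
            exact mul_le_mul_of_nonneg_left hcase (by positivity)
    have hcloseB : ‖((f' ^ 2 - (t1' ^ 2 - 4) * (t2' ^ 2 - 4) : ℤ) : ℚ_[p])
        / ((f ^ 2 - (t1 ^ 2 - 4) * (t2 ^ 2 - 4) : ℤ) : ℚ_[p]) - 1‖ < ‖(2 : ℚ_[p])‖ ^ 2 := by
      have hd : ((f' ^ 2 - (t1' ^ 2 - 4) * (t2' ^ 2 - 4) : ℤ) : ℚ_[p])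
          / ((f ^ 2 - (t1 ^ 2 - 4) * (t2 ^ 2 - 4) : ℤ) : ℚ_[p]) - 1
          = ((((f' ^ 2 - (t1' ^ 2 - 4) * (t2' ^ 2 - 4))
              - (f ^ 2 - (t1 ^ 2 - 4) * (t2 ^ 2 - 4))) : ℤ) : ℚ_[p])
            / ((f ^ 2 - (t1 ^ 2 - 4) * (t2 ^ 2 - 4) : ℤ) : ℚ_[p]) := by
        have hcb : ((((f' ^ 2 - (t1' ^ 2 - 4) * (t2' ^ 2 - 4))
              - (f ^ 2 - (t1 ^ 2 - 4) * (t2 ^ 2 - 4))) : ℤ) : ℚ_[p])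
            = ((f' ^ 2 - (t1' ^ 2 - 4) * (t2' ^ 2 - 4) : ℤ) : ℚ_[p])
              - ((f ^ 2 - (t1 ^ 2 - 4) * (t2 ^ 2 - 4) : ℤ) : ℚ_[p]) := Int.cast_sub _ _
        rw [hcb, sub_div, div_self hBQ]
      rw [hd, norm_div, two_norm_sq, ← hν, div_lt_iff₀ hBpos, hBnorm]
      calc ‖_‖ ≤ (p : ℝ) ^ (-(N : ℤ)) := hBdn
        _ < (p : ℝ) ^ (-(2 * ν)) * (p : ℝ) ^ (-(β : ℤ)) := by
            rw [← zpow_add₀ hpne]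
            exact (zpow_lt_zpow_iff_right₀ hp1).2 (by rw [hNz]; linarith)
    obtain ⟨s, hs⟩ := sq_of_close hcloseA
    obtain ⟨t, ht⟩ := sq_of_close hcloseB
    have hs0 : s ≠ 0 := by
      intro h
      exact (div_ne_zero hAQ' hAQ) (by rw [← hs, h]; norm_num)
    have ht0 : t ≠ 0 := by
      intro h
      exact (div_ne_zero hBQ' hBQ) (by rw [← ht, h]; norm_num)
    have eA : ((t2 ^ 2 - 4 : ℤ) : ℚ_[p]) * s ^ 2 = ((t2' ^ 2 - 4 : ℤ) : ℚ_[p]) := by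
      rw [hs, ← mul_div_assoc, mul_div_cancel_left₀ _ hAQ]
    have eB : ((f ^ 2 - (t1 ^ 2 - 4) * (t2 ^ 2 - 4) : ℤ) : ℚ_[p]) * t ^ 2
        = ((f' ^ 2 - (t1' ^ 2 - 4) * (t2' ^ 2 - 4) : ℤ) : ℚ_[p]) := by
      rw [ht, ← mul_div_assoc, mul_div_cancel_left₀ _ hBQ]
    rw [← eA, ← eB, hilb_mul_sq s t hs0 ht0]
  · -- large valuation case: both B and B' are squares in ℚ_p
    push_neg at hcase
    have hAle : ‖((t2 ^ 2 - 4 : ℤ) : ℚ_[p])‖ ≤ (p : ℝ) ^ (-(β : ℤ) - 2 * ν - 1) := by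
      rw [norm_int_cast _ hA0] at hcase ⊢
      have := (zpow_lt_zpow_iff_right₀ hp1).1 hcase
      exact (zpow_le_zpow_iff_right₀ hp1).2 (by omega)
    have hAle' : ‖((t2' ^ 2 - 4 : ℤ) : ℚ_[p])‖ ≤ (p : ℝ) ^ (-(β : ℤ) - 2 * ν - 1) := by
      have hsplit : ((t2' ^ 2 - 4 : ℤ) : ℚ_[p]) = ((t2 ^ 2 - 4 : ℤ) : ℚ_[p])
          + ((((t2' ^ 2 - 4) - (t2 ^ 2 - 4)) : ℤ) : ℚ_[p]) := by push_cast; ring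
      rw [hsplit]
      refine le_trans (Padic.nonarchimedean _ _) (max_le hAle (le_trans hAdn ?_))
      exact (zpow_le_zpow_iff_right₀ hp1).2 (by rw [hNz]; linarith)
    rw [hilb_eq_one_of_small (t2 ^ 2 - 4) _ (t1 ^ 2 - 4) f hf0 (by ring) (β : ℤ)
        hBnorm hAle,
      hilb_eq_one_of_small (t2' ^ 2 - 4) _ (t1' ^ 2 - 4) f' hf0' (by ring) (β : ℤ)
        hBnorm' hAle']
end

section
/- Suppose α_p ≥ β_p + 1 + ν_p(4), where α_p = ν_p(t_2^2-4) and β_p = ν_p(f^2-(t_1^2-4)(t_2^2-4)) for positive integers t_1, t_2 > 2 and f with f^2 > (t_1^2-4)(t_2^2-4). Then β_p is even, and writing f^2 - (t_1^2-4)(t_2^2-4) = p^{β_p} v with p ∤ v, one has: if p > 2 then v is a quadratic residue mod p, and if p = 2 then v ≡ 1 (mod 8). Consequently the Hilbert symbol (t_2^2-4, f^2-(t_1^2-4)(t_2^2-4))_p equals 1. -/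
open scoped Classical

lemma exists_sqrt_padic (p : ℕ) [Fact p.Prime] (v a : ℤ) (c : ℕ)
    (hdvd : (p:ℤ)^(c+1) ∣ a^2 - v)
    (hlt : ((p:ℝ))^(-((c:ℤ)+1)) < ‖((2*a : ℤ) : ℤ_[p])‖^2) :
    IsSquare (v : ℤ_[p]) := by
  set F : Polynomial ℤ_[p] := Polynomial.X^2 - Polynomial.C (v : ℤ_[p]) with hF
  have heval : F.eval (a : ℤ_[p]) = ((a^2 - v : ℤ) : ℤ_[p]) := by push_cast; simp [hF]
  have hdeval : F.derivative.eval (a:ℤ_[p]) = ((2*a : ℤ):ℤ_[p]) := by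
    simp [hF]; exact Or.inl one_add_one_eq_two
  have hnorm : ‖F.eval (a:ℤ_[p])‖ < ‖F.derivative.eval (a:ℤ_[p])‖^2 := by
    rw [heval, hdeval]
    calc ‖((a^2-v:ℤ):ℤ_[p])‖ ≤ (p:ℝ)^(-((c+1:ℕ)):ℤ) :=
          PadicInt.norm_int_le_pow_iff_dvd.mpr hdvd
      _ < _ := by convert hlt using 2; omega
  obtain ⟨z, hz, -⟩ := hensels_lemma hnorm
  have : z^2 - (v:ℤ_[p]) = 0 := by simpa [hF] using hz
  exact ⟨z, by linear_combination -this⟩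

lemma sq_odd (p : ℕ) [Fact p.Prime] (hp2 : 2 < p) (v : ℤ) (hnd : ¬ (p:ℤ) ∣ v)
    (h : IsSquare (v : ZMod p)) : IsSquare (v : ℤ_[p]) := by
  obtain ⟨s, hs⟩ := h
  set a : ℤ := (s.val : ℤ) with ha
  have hdvd : (p:ℤ)^(0+1) ∣ a^2 - v := by
    rw [pow_one, ← ZMod.intCast_zmod_eq_zero_iff_dvd]
    push_cast
    simp [ha, ZMod.natCast_val, ZMod.cast_id, hs]
    ring
  have hpa : ¬ (p:ℤ) ∣ a := by
    intro hd
    apply hnd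
    have h2 : (p:ℤ) ∣ a^2 - v := by simpa using hdvd
    have := dvd_sub (dvd_pow hd (two_ne_zero)) h2
    simpa using this
  have hp2' : ¬ (p:ℤ) ∣ 2 := by
    intro hd
    have := Int.le_of_dvd (by norm_num) hd
    omega
  have hu : ¬ (p:ℤ) ∣ 2*a := fun hd => by
    rcases (Int.Prime.dvd_mul' (by exact_mod_cast Fact.out) hd) with h | h
    exacts [hp2' h, hpa h]
  have hn1 : ‖((2*a : ℤ) : ℤ_[p])‖ = 1 := by
    refine le_antisymm (PadicInt.norm_le_one _) ?_
    by_contra hlt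
    exact hu ((PadicInt.norm_int_lt_one_iff_dvd _).1 (lt_of_not_ge hlt))
  refine exists_sqrt_padic p v a 0 hdvd ?_
  rw [hn1]
  have h1p : (1:ℝ) < p := by exact_mod_cast (Fact.out : p.Prime).one_lt
  have : ((p:ℝ))^(-(((0:ℕ):ℤ)+1)) = (p:ℝ)⁻¹ := by
    norm_num
  rw [this, one_pow]
  exact inv_lt_one_of_one_lt₀ h1p

lemma sq_two (v : ℤ) (h8 : v % 8 = 1) : IsSquare (v : ℤ_[2]) := by
  have hdvd : ((2:ℕ):ℤ)^(2+1) ∣ (1:ℤ)^2 - v := by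
    norm_num
    omega
  refine exists_sqrt_padic 2 v 1 2 hdvd ?_
  have : ((2*1 : ℤ) : ℤ_[2]) = ((2:ℕ) : ℤ_[2]) := by norm_num
  rw [this, PadicInt.norm_p]
  norm_num

theorem stmt5 (p : ℕ) [Fact p.Prime]
    (t1 t2 f : ℤ) (h1 : 2 < t1) (h2 : 2 < t2) (hf : 0 < f)
    (hpos : (t1 ^ 2 - 4) * (t2 ^ 2 - 4) < f ^ 2)
    (α β : ℕ)
    (hα : α = padicValInt p (t2 ^ 2 - 4))
    (hβ : β = padicValInt p (f ^ 2 - (t1 ^ 2 - 4) * (t2 ^ 2 - 4)))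
    (hge : β + 1 + padicValNat p 4 ≤ α) :
    Even β ∧
    (∀ v : ℤ, f ^ 2 - (t1 ^ 2 - 4) * (t2 ^ 2 - 4) = (p : ℤ) ^ β * v →
      ¬ (p : ℤ) ∣ v →
      (2 < p → IsSquare (v : ZMod p)) ∧ (p = 2 → v % 8 = 1)) ∧
    hilbertSym p ((t2 ^ 2 - 4 : ℤ) : ℚ_[p])
        ((f ^ 2 - (t1 ^ 2 - 4) * (t2 ^ 2 - 4) : ℤ) : ℚ_[p]) = 1 := by
  have hp : p.Prime := Fact.out
  have hpZ : (p:ℤ) ≠ 0 := by exact_mod_cast hp.ne_zero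
  set A : ℤ := t1^2 - 4 with hAdef
  set B : ℤ := t2^2 - 4 with hBdef
  set D : ℤ := f^2 - A*B with hDdef
  have hA : 0 < A := by nlinarith
  have hB : 0 < B := by nlinarith
  have hD : 0 < D := by simp [hDdef]; linarith
  have hDne : D ≠ 0 := hD.ne'
  have hfne2 : f^2 ≠ 0 := by positivity
  have hpαB : (p:ℤ)^α ∣ B := hα ▸ padicValInt_dvd B
  have hβD : (p:ℤ)^β ∣ D := hβ ▸ padicValInt_dvd D
  have hβ1D : ¬ (p:ℤ)^(β+1) ∣ D := by
    rw [padicValInt_dvd_iff]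
    push_neg
    exact ⟨hDne, by omega⟩
  have hβ1AB : (p:ℤ)^(β+1+padicValNat p 4) ∣ A*B :=
    ((pow_dvd_pow (p:ℤ) hge).trans hpαB).mul_left A
  have hf2 : f^2 = A*B + D := by ring
  have hβf2 : (p:ℤ)^β ∣ f^2 := by
    rw [hf2]
    exact dvd_add ((pow_dvd_pow (p:ℤ) (by omega)).trans hβ1AB) hβD
  have hβ1f2 : ¬ (p:ℤ)^(β+1) ∣ f^2 := by
    intro h
    apply hβ1D
    have hAB : (p:ℤ)^(β+1) ∣ A*B := (pow_dvd_pow (p:ℤ) (by omega)).trans hβ1AB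
    have := dvd_sub h hAB
    simpa [hDdef] using this
  have hvalf2 : padicValInt p (f^2) = β := by
    have h1 : β ≤ padicValInt p (f^2) := by
      rcases (padicValInt_dvd_iff β (f^2)).1 hβf2 with h | h
      · exact absurd h hfne2
      · exact h
    have h2 : ¬ (β+1 ≤ padicValInt p (f^2)) := fun h =>
      hβ1f2 ((padicValInt_dvd_iff _ _).2 (Or.inr h))
    omega
  have hfne : f ≠ 0 := hf.ne'
  have hval2 : padicValInt p (f^2) = 2 * padicValInt p f := by
    rw [sq, padicValInt.mul hfne hfne]; ring
  set m := padicValInt p f with hm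
  have hβ2m : β = 2*m := by omega
  have heven : Even β := ⟨m, by omega⟩
  have key : ∀ v : ℤ, D = (p:ℤ)^β * v → ¬(p:ℤ) ∣ v →
      (2 < p → IsSquare (v : ZMod p)) ∧ (p = 2 → v % 8 = 1) := by
    intro v hveq hvnd
    obtain ⟨g, hg⟩ : (p:ℤ)^m ∣ f := padicValInt_dvd f
    have hpg : ¬ (p:ℤ) ∣ g := by
      intro hd
      obtain ⟨g', hg'⟩ := hd
      exact hβ1f2 ⟨(p:ℤ) * g'^2, by rw [hβ2m, hg, hg']; ring⟩
    have hg2 : (p:ℤ)^β * g^2 = f^2 := by rw [hβ2m, hg]; ring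
    have hsub : (p:ℤ)^(1+padicValNat p 4) ∣ g^2 - v := by
      have hkey : (p:ℤ)^β * (g^2 - v) = A*B := by
        rw [mul_sub, hg2]
        linarith [hveq]
      have hd : (p:ℤ)^β * (p:ℤ)^(1+padicValNat p 4) ∣ (p:ℤ)^β * (g^2-v) := by
        rw [hkey, ← pow_add]
        exact (pow_dvd_pow (p:ℤ) (by omega)).trans hβ1AB
      exact (mul_dvd_mul_iff_left (pow_ne_zero β hpZ)).1 hd
    constructor
    · intro hp2
      have hν : padicValNat p 4 = 0 := by
        apply padicValNat.eq_zero_of_not_dvd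
        intro hd
        have h4 : (4:ℕ) = 2^2 := by norm_num
        have := hp.dvd_of_dvd_pow (h4 ▸ hd)
        have := Nat.le_of_dvd (by norm_num) this
        omega
      have hdv : (p:ℤ) ∣ g^2 - v := by simpa [hν] using hsub
      have hvz : (v : ZMod p) = (g:ZMod p)^2 := by
        have h0 : ((g^2 - v : ℤ) : ZMod p) = 0 :=
          (ZMod.intCast_zmod_eq_zero_iff_dvd _ _).2 hdv
        push_cast at h0
        linear_combination -h0
      exact ⟨(g:ZMod p), by rw [hvz]; ring⟩
    · intro hp2'
      subst hp2'
      have hν : padicValNat 2 4 = 2 := by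
        have : (4:ℕ) = 2^2 := by norm_num
        rw [this, padicValNat.prime_pow]
      rw [hν] at hsub
      norm_num at hsub
      have hgo : ¬ (2:ℤ) ∣ g := by exact_mod_cast hpg
      obtain ⟨k, hk⟩ : Odd g := Int.not_even_iff_odd.1 (fun he => hgo he.two_dvd)
      obtain ⟨j, hj⟩ := Int.even_mul_succ_self k
      have hg8 : g^2 = 8*j + 1 := by rw [hk]; linear_combination 4*hj
      obtain ⟨c, hc⟩ := hsub
      omega
  obtain ⟨v0, hv0⟩ := hβD
  have hv0nd : ¬ (p:ℤ) ∣ v0 := by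
    intro hd
    obtain ⟨c, hc⟩ := hd
    exact hβ1D ⟨c, by rw [hv0, hc]; ring⟩
  have hsq := key v0 hv0 hv0nd
  have hsqZ : IsSquare ((v0 : ℤ_[p])) := by
    rcases (show p = 2 ∨ 2 < p by have := hp.two_le; omega) with h | h
    · subst h; exact sq_two v0 (hsq.2 rfl)
    · exact sq_odd p h v0 hv0nd (hsq.1 h)
  have hsqv : IsSquare ((v0 : ℚ_[p])) := by
    obtain ⟨r, hr⟩ := hsqZ
    refine ⟨(r : ℚ_[p]), ?_⟩
    have := congrArg (fun x : ℤ_[p] => (x : ℚ_[p])) hr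
    push_cast at this ⊢
    exact this
  have hsqD : IsSquare ((D : ℚ_[p])) := by
    have hpp : IsSquare (((p:ℚ_[p]))^β) := ⟨(p:ℚ_[p])^m, by rw [hβ2m]; ring⟩
    have : ((D : ℚ_[p])) = ((p:ℚ_[p]))^β * (v0 : ℚ_[p]) := by
      rw [hv0]; push_cast; ring
    rw [this]
    exact hpp.mul hsqv
  refine ⟨heven, fun v hv hnd => key v hv hnd, ?_⟩
  obtain ⟨r, hr⟩ := hsqD
  rw [hilbertSym, if_pos]
  refine ⟨0, 1, r, fun h => one_ne_zero h.2.1, ?_⟩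
  rw [hr]; ring
end

section
/- For an odd positive integer c and integer n, the Salié sum T(0, n; c) = ∑_{x mod c, gcd(x,c)=1} (x/c) e(nx/c) satisfies |T(0, n; c)|^2 ≪_ε c^{1+ε} · gcd(n, c) for every ε > 0. -/
open scoped Classical
open Finset

/-- `e(x) = exp(2πix)`. -/
noncomputable def e (x : ℝ) : ℂ := Complex.exp (2 * Real.pi * Complex.I * x)

lemma e_add (x y : ℝ) : e (x + y) = e x * e y := by
  simp [e, ← Complex.exp_add]; ring_nf
lemma e_int (k : ℤ) : e k = 1 := by
  rw [e]
  have := Complex.exp_int_mul_two_pi_mul_I k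
  rw [← this]; push_cast; ring_nf
lemma e_int_add (x : ℝ) (k : ℤ) : e (x + k) = e x := by
  rw [e_add, e_int, mul_one]
lemma e_conj (x : ℝ) : (starRingEnd ℂ) (e x) = e (-x) := by
  rw [e, ← Complex.exp_conj]
  congr 1
  simp [Complex.ext_iff]
lemma e_abs (x : ℝ) : ‖e x‖ = 1 := by
  rw [e]
  have : (2 * Real.pi * Complex.I * x) = Complex.I * (2 * Real.pi * x : ℝ) := by
    push_cast; ring
  rw [this, Complex.norm_exp]
  simp [Complex.mul_re]
lemma e_nat_mul (x : ℝ) (t : ℕ) : e (t * x) = e x ^ t := by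
  rw [e, e, ← Complex.exp_nat_mul]
  congr 1; push_cast; ring
lemma e_eq_one_iff {x : ℝ} : e x = 1 ↔ ∃ k : ℤ, x = k := by
  rw [e, Complex.exp_eq_one_iff]
  constructor
  · rintro ⟨n, hn⟩
    refine ⟨n, ?_⟩
    have h2 : (2 * (Real.pi:ℂ) * Complex.I) ≠ 0 := by
      simp [Real.pi_ne_zero, Complex.I_ne_zero]
    have hn' : (x:ℂ) * (2 * (Real.pi:ℂ) * Complex.I) = (n:ℂ) * (2 * (Real.pi:ℂ) * Complex.I) := by
      rw [← hn]; ring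
    have : (x : ℂ) = n := mul_right_cancel₀ h2 hn'
    exact_mod_cast this
  · rintro ⟨k, hk⟩
    exact ⟨k, by rw [hk]; push_cast; ring⟩

lemma geom_e (q : ℕ) (hq : 0 < q) (M : ℕ) :
    (∑ t ∈ range q, e ((M * t : ℕ) / (q:ℝ))) = if q ∣ M then (q:ℂ) else 0 := by
  have hterm : ∀ t : ℕ, e ((M * t : ℕ) / (q:ℝ)) = e ((M:ℝ)/q) ^ t := by
    intro t
    rw [← e_nat_mul]
    congr 1
    push_cast; ring
  simp only [hterm]
  have hq' : (q:ℝ) ≠ 0 := by positivity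
  have hpow : e ((M:ℝ)/q) ^ q = 1 := by
    rw [← e_nat_mul]
    have : (q:ℝ) * ((M:ℝ)/q) = ((M:ℤ):ℝ) := by field_simp; norm_cast
    rw [this, e_int]
  by_cases hdvd : q ∣ M
  · have : e ((M:ℝ)/q) = 1 := by
      obtain ⟨k, hk⟩ := hdvd
      rw [e_eq_one_iff]
      exact ⟨k, by rw [hk]; push_cast; field_simp⟩
    rw [if_pos hdvd]
    simp [this]
  · have hne : e ((M:ℝ)/q) ≠ 1 := by
      rw [Ne, e_eq_one_iff]
      rintro ⟨k, hk⟩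
      apply hdvd
      have : (M:ℝ) = k * q := by field_simp at hk; linarith
      have hZ : (M:ℤ) = k * q := by exact_mod_cast this
      have : (q:ℤ) ∣ (M:ℤ) := ⟨k, by linarith⟩
      exact_mod_cast this
    rw [geom_sum_eq hne, hpow]
    simp [hdvd]

noncomputable def E (c : ℕ) (z : ZMod c) : ℂ := e ((z.val : ℝ) / c)

section Echar
variable {c : ℕ} [NeZero c]

lemma E_int (a : ℤ) : e ((a : ℝ) / c) = E c (a : ZMod c) := by
  have hc : (0:ℝ) < c := by exact_mod_cast Nat.pos_of_ne_zero (NeZero.ne c)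
  have hv : (((a : ZMod c).val : ℤ)) = a % c := ZMod.val_intCast a
  have h2 := Int.emod_add_mul_ediv a c
  have : (a : ℝ) / c = ((a : ZMod c).val : ℝ) / c + (a / (c:ℤ) : ℤ) := by
    rw [div_add' _ _ _ (ne_of_gt hc)]
    have : ((a : ZMod c).val : ℝ) + ((a / (c:ℤ) : ℤ) : ℝ) * (c : ℝ) = (a : ℝ) := by
      exact_mod_cast congrArg (Int.cast : ℤ → ℝ)
        (by rw [mul_comm]; omega : ((a : ZMod c).val : ℤ) + (a / (c:ℤ)) * c = a)
    rw [this]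
  rw [E, this, e_int_add]

omit [NeZero c] in
lemma E_eq (z : ZMod c) : E c z = e ((z.val : ℝ) / c) := rfl

lemma zmod_cast_val (z : ZMod c) : ((z.val : ℤ) : ZMod c) = z := by
  push_cast
  simp [ZMod.natCast_val, ZMod.cast_id]

lemma E_natCast (a : ℕ) : E c (a : ZMod c) = e ((a : ℝ) / c) := by
  have := E_int (c := c) (a : ℤ)
  push_cast at this
  rw [← this]

lemma E_add (z w : ZMod c) : E c (z + w) = E c z * E c w := by
  have : z + w = ((z.val + w.val : ℤ) : ZMod c) := by
    push_cast
    simp [ZMod.natCast_val, ZMod.cast_id]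
  rw [this, ← E_int]
  push_cast
  rw [add_div, e_add, E_eq, E_eq]

lemma E_zero : E c 0 = 1 := by
  have : (0 : ZMod c) = ((0:ℤ) : ZMod c) := by norm_num
  rw [this, ← E_int]
  norm_num
  simpa using e_int 0

lemma sum_units_eq (f : ZMod c → ℂ) :
    ∑ v : (ZMod c)ˣ, f ↑v
      = ∑ y ∈ (Finset.range c).filter (fun y => Nat.Coprime y c), f (y : ZMod c) := by
  refine Finset.sum_bij' (fun v _ => (v : ZMod c).val)
    (fun y hy => ZMod.unitOfCoprime y (by simpa using (Finset.mem_filter.mp hy).2))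
    ?_ ?_ ?_ ?_ ?_
  · intro v _
    exact Finset.mem_filter.mpr ⟨Finset.mem_range.mpr (ZMod.val_lt _), ZMod.val_coe_unit_coprime v⟩
  · intro y hy
    exact Finset.mem_univ _
  · intro v _
    apply Units.ext
    rw [ZMod.coe_unitOfCoprime]
    simp [ZMod.natCast_val, ZMod.cast_id]
  · intro y hy
    rw [ZMod.coe_unitOfCoprime]
    exact ZMod.val_cast_of_lt (Finset.mem_range.mp (Finset.mem_filter.mp hy).1)
  · intro v _
    congr 1
    simp [ZMod.natCast_val, ZMod.cast_id]

end Echar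

lemma moebius_ind (k : ℕ) :
    (∑ d ∈ k.divisors, ((ArithmeticFunction.moebius d : ℤ) : ℂ)) = if k = 1 then 1 else 0 := by
  have h2 : (∑ d ∈ k.divisors, (ArithmeticFunction.moebius d : ℤ)) = if k = 1 then 1 else 0 := by
    rw [show (∑ d ∈ k.divisors, (ArithmeticFunction.moebius d : ℤ))
        = (ArithmeticFunction.moebius * ArithmeticFunction.zeta) k from ?_]
    · rw [ArithmeticFunction.moebius_mul_coe_zeta]
      simp [ArithmeticFunction.one_apply]
    · rw [ArithmeticFunction.coe_mul_zeta_apply]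
  rw [show (∑ d ∈ k.divisors, ((ArithmeticFunction.moebius d : ℤ) : ℂ))
      = ((∑ d ∈ k.divisors, (ArithmeticFunction.moebius d : ℤ) : ℤ) : ℂ) by push_cast; rfl, h2]
  simp [apply_ite (fun z : ℤ => (z : ℂ))]

lemma filter_dvd_eq_image {c d : ℕ} (hdvd : d ∣ c) (hd0 : 0 < d) :
    (range c).filter (fun y => d ∣ y) = (range (c/d)).image (fun t => d * t) := by
  obtain ⟨q, rfl⟩ := hdvd
  have hq : (d * q) / d = q := by
    rw [Nat.mul_div_cancel_left _ hd0]
  ext y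
  simp only [mem_filter, mem_range, mem_image, hq]
  constructor
  · rintro ⟨hy, t, rfl⟩
    exact ⟨t, lt_of_mul_lt_mul_left hy (le_of_lt hd0), rfl⟩
  · rintro ⟨t, ht, rfl⟩
    exact ⟨Nat.mul_lt_mul_left hd0 |>.mpr ht, ⟨t, rfl⟩⟩

lemma R_bound {c : ℕ} [NeZero c] (m : ZMod c) :
    ‖∑ v : (ZMod c)ˣ, E c (m * ↑v)‖
      ≤ (c.divisors.card : ℝ) * (Nat.gcd m.val c) := by
  have hc : 0 < c := Nat.pos_of_ne_zero (NeZero.ne c)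
  set M := m.val with hM
  have key : (∑ v : (ZMod c)ˣ, E c (m * ↑v))
      = ∑ d ∈ c.divisors, ((ArithmeticFunction.moebius d : ℤ) : ℂ) *
          (if (c/d) ∣ M then ((c/d : ℕ) : ℂ) else 0) := by
    rw [sum_units_eq (fun z => E c (m * z))]
    have hterm : ∀ y : ℕ, E c (m * (y:ZMod c)) = e (((M * y : ℕ) : ℝ)/c) := by
      intro y
      rw [← E_natCast]
      congr 1
      push_cast
      rw [ZMod.natCast_val, ZMod.cast_id]
    calc ∑ y ∈ (range c).filter (fun y => Nat.Coprime y c), E c (m * (y : ZMod c))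
        = ∑ y ∈ range c, (if Nat.gcd y c = 1 then e (((M * y : ℕ) : ℝ)/c) else 0) := by
          rw [Finset.sum_filter]
          exact Finset.sum_congr rfl (fun y _ => by rw [hterm y])
      _ = ∑ y ∈ range c, (∑ d ∈ (Nat.gcd y c).divisors, ((ArithmeticFunction.moebius d : ℤ) : ℂ))
            * e (((M * y : ℕ) : ℝ)/c) := by
          refine Finset.sum_congr rfl (fun y _ => ?_)
          rw [moebius_ind, ite_mul, one_mul, zero_mul]
      _ = ∑ y ∈ range c, ∑ d ∈ c.divisors,
            (if d ∣ y then ((ArithmeticFunction.moebius d : ℤ) : ℂ) * e (((M * y : ℕ) : ℝ)/c) else 0) := by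
          refine Finset.sum_congr rfl (fun y hy => ?_)
          have hset : (Nat.gcd y c).divisors = c.divisors.filter (fun d => d ∣ y) := by
            ext d
            simp only [Nat.mem_divisors, Finset.mem_filter, Nat.dvd_gcd_iff]
            constructor
            · rintro ⟨⟨h1, h2⟩, h3⟩
              exact ⟨⟨h2, NeZero.ne c⟩, h1⟩
            · rintro ⟨⟨h2, h3⟩, h1⟩
              exact ⟨⟨h1, h2⟩, fun hg => (NeZero.ne c) (Nat.gcd_eq_zero_iff.mp hg).2⟩
          rw [hset, Finset.sum_filter, Finset.sum_mul]
          refine Finset.sum_congr rfl (fun d _ => ?_)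
          rw [ite_mul, zero_mul]
      _ = ∑ d ∈ c.divisors, ((ArithmeticFunction.moebius d : ℤ) : ℂ) *
            (∑ y ∈ (range c).filter (fun y => d ∣ y), e (((M * y : ℕ) : ℝ)/c)) := by
          rw [Finset.sum_comm]
          refine Finset.sum_congr rfl (fun d _ => ?_)
          rw [Finset.mul_sum, Finset.sum_filter]
      _ = ∑ d ∈ c.divisors, ((ArithmeticFunction.moebius d : ℤ) : ℂ) *
            (if (c/d) ∣ M then ((c/d : ℕ) : ℂ) else 0) := by
          refine Finset.sum_congr rfl (fun d hd => ?_)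
          obtain ⟨hdvd, -⟩ := Nat.mem_divisors.mp hd
          have hd0 : 0 < d := Nat.pos_of_dvd_of_pos hdvd hc
          have hq0 : 0 < c / d := Nat.div_pos (Nat.le_of_dvd hc hdvd) hd0
          congr 1
          rw [filter_dvd_eq_image hdvd hd0, Finset.sum_image
            (fun a _ b _ h => Nat.eq_of_mul_eq_mul_left hd0 h)]
          rw [← geom_e (c/d) hq0 M]
          refine Finset.sum_congr rfl (fun t _ => ?_)
          congr 1
          have hcd : (c : ℝ) = (d : ℝ) * ((c/d : ℕ) : ℝ) := by
            exact_mod_cast (Nat.mul_div_cancel' hdvd).symm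
          push_cast
          rw [hcd]
          have hd0' : (d:ℝ) ≠ 0 := by positivity
          have hq0' : ((c/d : ℕ):ℝ) ≠ 0 := by positivity
          field_simp
  rw [key]
  refine le_trans (norm_sum_le _ _) ?_
  have hgcd0 : 0 < Nat.gcd M c := Nat.gcd_pos_of_pos_right _ hc
  have hbound : ∀ d ∈ c.divisors,
      ‖((ArithmeticFunction.moebius d : ℤ) : ℂ) *
        (if (c/d) ∣ M then ((c/d : ℕ) : ℂ) else 0)‖ ≤
      (if (c/d) ∣ M then ((c/d : ℕ) : ℝ) else 0) := by
    intro d hd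
    rw [norm_mul]
    have h1 : ‖((ArithmeticFunction.moebius d : ℤ) : ℂ)‖ ≤ 1 := by
      rw [Complex.norm_intCast]
      exact_mod_cast ArithmeticFunction.abs_moebius_le_one
    by_cases h : (c/d) ∣ M
    · simp only [if_pos h]
      rw [Complex.norm_natCast]
      nlinarith [norm_nonneg ((ArithmeticFunction.moebius d : ℤ) : ℂ),
        (by positivity : (0:ℝ) ≤ ((c/d : ℕ):ℝ))]
    · simp [h]
  refine le_trans (Finset.sum_le_sum hbound) ?_
  have hswap : (∑ d ∈ c.divisors, (if (c/d) ∣ M then ((c/d : ℕ) : ℝ) else 0))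
      = ∑ q ∈ c.divisors, (if q ∣ M then (q : ℝ) else 0) :=
    Nat.sum_div_divisors c (fun q => if q ∣ M then (q : ℝ) else 0)
  rw [hswap]
  refine le_trans (Finset.sum_le_card_nsmul _ _ ((Nat.gcd M c : ℝ)) ?_) ?_
  · intro q hq
    obtain ⟨hqc, -⟩ := Nat.mem_divisors.mp hq
    by_cases h : q ∣ M
    · simp only [if_pos h]
      exact_mod_cast Nat.le_of_dvd hgcd0 (Nat.dvd_gcd h hqc)
    · simp [h]
  · rw [nsmul_eq_mul]


/-- The Salié sum `T(m,n;c) = ∑_{x mod c, (x,c)=1} (x/c) e((m·x̄ + n·x)/c)`. -/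
noncomputable def salie (m n : ℤ) (c : ℕ) : ℂ :=
  ∑ x ∈ (Finset.range c).filter (fun x => Nat.Coprime x c),
    (jacobiSym (x : ℤ) c : ℂ) *
      e (((m * ((((x : ℤ) : ZMod c)⁻¹).val : ℤ) + n * x : ℤ) : ℝ) / (c : ℝ))

section Chi
variable {c : ℕ} [NeZero c]

noncomputable def chi (c : ℕ) (z : ZMod c) : ℂ := ((jacobiSym (z.val : ℤ) c : ℤ) : ℂ)

lemma chi_mul (z w : ZMod c) : chi c (z * w) = chi c z * chi c w := by
  unfold chi
  have hval : (((z * w).val : ℤ)) % c = ((z.val : ℤ) * (w.val : ℤ)) % c := by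
    rw [ZMod.val_mul]
    push_cast
    simp [Int.emod_emod_of_dvd]
  rw [jacobiSym.mod_left' hval, jacobiSym.mul_left]
  push_cast
  ring

lemma chi_sq_unit (v : (ZMod c)ˣ) : chi c ↑v * chi c ↑v = 1 := by
  unfold chi
  have hco : Int.gcd ((v : ZMod c).val : ℤ) c = 1 := by
    rw [Int.gcd_natCast_natCast]
    exact ZMod.val_coe_unit_coprime v
  have h2 := jacobiSym.sq_one hco
  rw [← Int.cast_mul, ← sq, h2, Int.cast_one]

lemma chi_abs_le (z : ZMod c) : ‖chi c z‖ ≤ 1 := by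
  unfold chi
  rcases jacobiSym.trichotomy ((z.val : ℤ)) c with h | h | h <;> rw [h] <;> norm_num

lemma E_conj (z : ZMod c) : (starRingEnd ℂ) (E c z) = E c (-z) := by
  have h1 : E c z * E c (-z) = 1 := by rw [← E_add]; simp [E_zero]
  have h2 : (starRingEnd ℂ) (E c z) * E c z = 1 := by
    rw [mul_comm, Complex.mul_conj, ← Complex.sq_norm]
    rw [E_eq, e_abs]
    norm_num
  calc (starRingEnd ℂ) (E c z) = (starRingEnd ℂ) (E c z) * (E c z * E c (-z)) := by rw [h1, mul_one]
    _ = ((starRingEnd ℂ) (E c z) * E c z) * E c (-z) := by ring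
    _ = E c (-z) := by rw [h2, one_mul]

lemma salie_units (n : ℤ) :
    salie 0 n c = ∑ u : (ZMod c)ˣ, chi c ↑u * E c ((n : ZMod c) * ↑u) := by
  rw [salie, sum_units_eq (fun z => chi c z * E c ((n : ZMod c) * z))]
  refine Finset.sum_congr rfl (fun y hy => ?_)
  obtain ⟨hy1, -⟩ := Finset.mem_filter.mp hy
  have hylt := Finset.mem_range.mp hy1
  have hval : ((y : ZMod c)).val = y := ZMod.val_cast_of_lt hylt
  congr 1
  · unfold chi
    rw [hval]
  · have harg : (0 * ((((y : ℤ) : ZMod c)⁻¹).val : ℤ) + n * y : ℤ) = n * y := by ring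
    rw [harg]
    rw [E_int (n * y)]
    congr 1
    push_cast
    ring

lemma salie_sq (n : ℤ) :
    ‖salie 0 n c‖ ^ 2 ≤ (c.divisors.card : ℝ) *
      ∑ k : (ZMod c)ˣ, (Nat.gcd ((n : ZMod c) * ((k : ZMod c) - 1)).val c : ℝ) := by
  set S := salie 0 n c with hSdef
  have habs : ‖S‖ ^ 2 = ‖S * (starRingEnd ℂ) S‖ := by
    rw [norm_mul, Complex.norm_conj, sq]
  rw [habs]
  have hexp : S * (starRingEnd ℂ) S
      = ∑ k : (ZMod c)ˣ, chi c ↑k *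
          ∑ v : (ZMod c)ˣ, E c (((n : ZMod c) * ((k : ZMod c) - 1)) * ↑v) := by
    rw [hSdef, salie_units, map_sum]
    have hconj : ∀ v : (ZMod c)ˣ,
        (starRingEnd ℂ) (chi c ↑v * E c ((n : ZMod c) * ↑v))
          = chi c ↑v * E c (-((n : ZMod c) * ↑v)) := by
      intro v
      rw [map_mul, E_conj]
      congr 1
      unfold chi
      exact map_intCast (starRingEnd ℂ) _
    simp only [hconj]
    rw [Finset.sum_mul_sum, Finset.sum_comm]
    calc ∑ v : (ZMod c)ˣ, ∑ u : (ZMod c)ˣ,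
            (chi c ↑u * E c ((n : ZMod c) * ↑u)) * (chi c ↑v * E c (-((n : ZMod c) * ↑v)))
        = ∑ v : (ZMod c)ˣ, ∑ k : (ZMod c)ˣ,
            (chi c ↑(k * v) * E c ((n : ZMod c) * ↑(k * v))) * (chi c ↑v * E c (-((n : ZMod c) * ↑v))) := by
          refine Finset.sum_congr rfl (fun v _ => ?_)
          exact (Fintype.sum_equiv (Equiv.mulRight v)
            (fun k => (chi c ↑(k * v) * E c ((n : ZMod c) * ↑(k * v))) *
              (chi c ↑v * E c (-((n : ZMod c) * ↑v))))
            (fun u => (chi c ↑u * E c ((n : ZMod c) * ↑u)) *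
              (chi c ↑v * E c (-((n : ZMod c) * ↑v))))
            (fun k => rfl)).symm
      _ = ∑ v : (ZMod c)ˣ, ∑ k : (ZMod c)ˣ,
            chi c ↑k * E c (((n : ZMod c) * ((k : ZMod c) - 1)) * ↑v) := by
          refine Finset.sum_congr rfl (fun v _ => Finset.sum_congr rfl (fun k _ => ?_))
          rw [Units.val_mul, chi_mul]
          have hE : E c ((n : ZMod c) * ((k : ZMod c) * (v : ZMod c))) * E c (-((n : ZMod c) * ↑v))
              = E c (((n : ZMod c) * ((k : ZMod c) - 1)) * ↑v) := by
            rw [← E_add]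
            congr 1
            ring
          calc (chi c ↑k * chi c ↑v * E c ((n : ZMod c) * ((k : ZMod c) * (v : ZMod c)))) *
                (chi c ↑v * E c (-((n : ZMod c) * ↑v)))
              = chi c ↑k * (chi c ↑v * chi c ↑v) *
                (E c ((n : ZMod c) * ((k : ZMod c) * (v : ZMod c))) * E c (-((n : ZMod c) * ↑v))) := by
                ring
            _ = chi c ↑k * E c (((n : ZMod c) * ((k : ZMod c) - 1)) * ↑v) := by
                rw [chi_sq_unit, hE, mul_one]
      _ = ∑ k : (ZMod c)ˣ, chi c ↑k *
            ∑ v : (ZMod c)ˣ, E c (((n : ZMod c) * ((k : ZMod c) - 1)) * ↑v) := by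
          rw [Finset.sum_comm]
          exact Finset.sum_congr rfl (fun k _ => by rw [Finset.mul_sum])
  rw [hexp]
  refine le_trans (norm_sum_le _ _) ?_
  rw [Finset.mul_sum]
  refine Finset.sum_le_sum (fun k _ => ?_)
  rw [norm_mul]
  have h1 := chi_abs_le (c := c) ↑k
  have h2 := R_bound ((n : ZMod c) * ((k : ZMod c) - 1))
  have h3 : (0:ℝ) ≤ ‖∑ v : (ZMod c)ˣ, E c (((n : ZMod c) * ((k : ZMod c) - 1)) * ↑v)‖ :=
    norm_nonneg _
  calc ‖chi c ↑k‖ *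
        ‖∑ v : (ZMod c)ˣ, E c (((n : ZMod c) * ((k : ZMod c) - 1)) * ↑v)‖
      ≤ 1 * ‖∑ v : (ZMod c)ˣ, E c (((n : ZMod c) * ((k : ZMod c) - 1)) * ↑v)‖ := by
        exact mul_le_mul_of_nonneg_right h1 h3
    _ ≤ (c.divisors.card : ℝ) * (Nat.gcd ((n : ZMod c) * ((k : ZMod c) - 1)).val c : ℝ) := by
        rw [one_mul]; exact h2
end Chi

section Gcd
variable {c : ℕ} [NeZero c]

lemma gcd_val_intCast (a : ℤ) : Nat.gcd ((a : ZMod c)).val c = Int.gcd a c := by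
  have hv : (((a : ZMod c).val : ℤ)) = a % c := ZMod.val_intCast a
  have h0 : Nat.gcd ((a : ZMod c)).val c = Int.gcd (a % c) c := by
    rw [← Int.gcd_natCast_natCast, hv]
  rw [h0]
  have hmod : a % (c:ℤ) = a - (c:ℤ) * (a / c) := by
    rw [Int.emod_def]
  apply Nat.dvd_antisymm
  · apply Int.natCast_dvd_natCast.mp
    refine Int.dvd_coe_gcd ?_ (Int.gcd_dvd_right _ _)
    have h1 : ((Int.gcd (a % c) c : ℕ) : ℤ) ∣ a % c := Int.gcd_dvd_left _ _
    have h2 : ((Int.gcd (a % c) c : ℕ) : ℤ) ∣ (c:ℤ) := Int.gcd_dvd_right _ _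
    have h3 : ((Int.gcd (a % c) c : ℕ) : ℤ) ∣ (a % c + (c:ℤ) * (a / c)) :=
      dvd_add h1 (h2.mul_right _)
    rwa [Int.emod_add_mul_ediv] at h3
  · apply Int.natCast_dvd_natCast.mp
    refine Int.dvd_coe_gcd ?_ (Int.gcd_dvd_right _ _)
    rw [hmod]
    exact dvd_sub (Int.gcd_dvd_left _ _) (Dvd.dvd.mul_right (Int.gcd_dvd_right _ _) _)

lemma gcd_mul_le (n : ℤ) (z : ZMod c) :
    (Nat.gcd ((n : ZMod c) * z).val c : ℝ)
      ≤ (Int.gcd n c : ℝ) * (Nat.gcd z.val c : ℝ) := by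
  have hc : 0 < c := Nat.pos_of_ne_zero (NeZero.ne c)
  have hz : (n : ZMod c) * z = ((n * (z.val : ℤ) : ℤ) : ZMod c) := by
    push_cast
    rw [ZMod.natCast_val, ZMod.cast_id]
  rw [hz, gcd_val_intCast]
  have hdvd : Int.gcd (n * (z.val : ℤ)) c ∣ Int.gcd n c * Nat.gcd z.val c := by
    have h1 : Int.gcd (n * (z.val : ℤ)) c = Nat.gcd c (n.natAbs * z.val) := by
      rw [Int.gcd, Int.natAbs_mul]
      simp only [Int.natAbs_natCast]
      rw [Nat.gcd_comm]
    have h2 : Nat.gcd c (n.natAbs * z.val) ∣ Nat.gcd c n.natAbs * Nat.gcd c z.val :=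
      Nat.gcd_mul_right_dvd_mul_gcd c n.natAbs z.val
    rw [h1]
    have h3 : Nat.gcd c n.natAbs = Int.gcd n c := by rw [Int.gcd]; simp [Nat.gcd_comm]
    have h4 : Nat.gcd c z.val = Nat.gcd z.val c := Nat.gcd_comm _ _
    rw [h3, h4] at h2
    exact h2
  have hpos : 0 < Int.gcd n c * Nat.gcd z.val c := by
    apply Nat.mul_pos
    · exact Int.gcd_pos_of_ne_zero_right n (by exact_mod_cast hc.ne')
    · exact Nat.gcd_pos_of_pos_right _ hc
  exact_mod_cast Nat.le_of_dvd hpos hdvd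

lemma zmod_sum_range {M : Type*} [AddCommMonoid M] (f : ℕ → M) :
    ∑ z : ZMod c, f z.val = ∑ y ∈ range c, f y := by
  refine Finset.sum_bij' (fun z _ => z.val) (fun y _ => (y : ZMod c)) ?_ ?_ ?_ ?_ ?_
  · intro z _
    exact Finset.mem_range.mpr (ZMod.val_lt z)
  · intro y _
    exact Finset.mem_univ _
  · intro z _
    simp [ZMod.natCast_val, ZMod.cast_id]
  · intro y hy
    exact ZMod.val_cast_of_lt (Finset.mem_range.mp hy)
  · intro z _
    rfl

lemma sum_gcd_nat : (∑ y ∈ range c, Nat.gcd y c) ≤ c.divisors.card * c := by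
  have hc : 0 < c := Nat.pos_of_ne_zero (NeZero.ne c)
  have hmaps : ∀ y ∈ range c, Nat.gcd y c ∈ c.divisors := by
    intro y _
    exact Nat.mem_divisors.mpr ⟨Nat.gcd_dvd_right _ _, hc.ne'⟩
  rw [← Finset.sum_fiberwise_of_maps_to hmaps (fun y => Nat.gcd y c)]
  have hinner : ∀ d ∈ c.divisors,
      (∑ y ∈ (range c).filter (fun y => Nat.gcd y c = d), Nat.gcd y c) ≤ c := by
    intro d hd
    obtain ⟨hdvd, -⟩ := Nat.mem_divisors.mp hd
    have hd0 : 0 < d := Nat.pos_of_dvd_of_pos hdvd hc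
    have h1 : (∑ y ∈ (range c).filter (fun y => Nat.gcd y c = d), Nat.gcd y c)
        = ((range c).filter (fun y => Nat.gcd y c = d)).card * d := by
      rw [Finset.sum_congr rfl (fun y hy => (Finset.mem_filter.mp hy).2)]
      rw [Finset.sum_const, smul_eq_mul]
    rw [h1]
    have hsub : (range c).filter (fun y => Nat.gcd y c = d)
        ⊆ (range c).filter (fun y => d ∣ y) := by
      intro y hy
      obtain ⟨h1', h2'⟩ := Finset.mem_filter.mp hy
      exact Finset.mem_filter.mpr ⟨h1', h2' ▸ Nat.gcd_dvd_left _ _⟩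
    have hcard : ((range c).filter (fun y => Nat.gcd y c = d)).card ≤ c / d := by
      refine le_trans (Finset.card_le_card hsub) ?_
      rw [filter_dvd_eq_image hdvd hd0]
      refine le_trans (Finset.card_image_le) ?_
      rw [Finset.card_range]
    calc ((range c).filter (fun y => Nat.gcd y c = d)).card * d ≤ (c / d) * d :=
          Nat.mul_le_mul_right d hcard
      _ = c := Nat.div_mul_cancel hdvd
  calc (∑ d ∈ c.divisors, ∑ y ∈ (range c).filter (fun y => Nat.gcd y c = d), Nat.gcd y c)
      ≤ ∑ d ∈ c.divisors, c := Finset.sum_le_sum hinner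
    _ = c.divisors.card * c := by rw [Finset.sum_const, smul_eq_mul]

lemma sum_units_gcd_le (n : ℤ) :
    (∑ k : (ZMod c)ˣ, (Nat.gcd ((n : ZMod c) * ((k : ZMod c) - 1)).val c : ℝ))
      ≤ (Int.gcd n c : ℝ) * ((c.divisors.card : ℝ) * c) := by
  have hc : 0 < c := Nat.pos_of_ne_zero (NeZero.ne c)
  have step1 : (∑ k : (ZMod c)ˣ, (Nat.gcd ((n : ZMod c) * ((k : ZMod c) - 1)).val c : ℝ))
      ≤ ∑ k : (ZMod c)ˣ, (Int.gcd n c : ℝ) * (Nat.gcd ((k : ZMod c) - 1).val c : ℝ) :=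
    Finset.sum_le_sum (fun k _ => gcd_mul_le n _)
  refine le_trans step1 ?_
  rw [← Finset.mul_sum]
  refine mul_le_mul_of_nonneg_left ?_ (by positivity)
  -- ∑ over units of gcd((k-1).val, c) ≤ ∑ over all z of gcd(z.val, c)
  have hinj : Function.Injective (fun k : (ZMod c)ˣ => (k : ZMod c) - 1) := by
    intro a b hab
    simp only [sub_left_inj] at hab
    exact Units.ext hab
  have step2 : (∑ k : (ZMod c)ˣ, (Nat.gcd ((k : ZMod c) - 1).val c : ℝ))
      ≤ ∑ z : ZMod c, (Nat.gcd z.val c : ℝ) := by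
    have him : ∑ z ∈ Finset.univ.image (fun k : (ZMod c)ˣ => (k : ZMod c) - 1),
        (Nat.gcd z.val c : ℝ) = ∑ k : (ZMod c)ˣ, (Nat.gcd ((k : ZMod c) - 1).val c : ℝ) :=
      Finset.sum_image (fun a _ b _ h => hinj h)
    rw [← him]
    refine Finset.sum_le_sum_of_subset_of_nonneg (Finset.subset_univ _) ?_
    intro z _ _
    positivity
  refine le_trans step2 ?_
  rw [zmod_sum_range (fun y => (Nat.gcd y c : ℝ))]
  have := sum_gcd_nat (c := c)
  calc (∑ y ∈ range c, (Nat.gcd y c : ℝ)) = ((∑ y ∈ range c, Nat.gcd y c : ℕ) : ℝ) := by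
        push_cast; rfl
    _ ≤ ((c.divisors.card * c : ℕ) : ℝ) := by exact_mod_cast this
    _ = (c.divisors.card : ℝ) * c := by push_cast; rfl

end Gcd

lemma card_divisors_rpow_le (ε : ℝ) (hε : 0 < ε) :
    ∃ K : ℝ, 0 < K ∧ ∀ n : ℕ, 0 < n → (n.divisors.card : ℝ) ≤ K * (n : ℝ) ^ ε := by
  have hlog2 : (0:ℝ) < Real.log 2 := Real.log_pos (by norm_num)
  set C : ℝ := 1 + 1 / (ε * Real.log 2) with hCdef
  have hC1 : 1 ≤ C := by
    have h : 0 < 1 / (ε * Real.log 2) := by positivity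
    rw [hCdef]
    linarith
  have hC0 : 0 < C := lt_of_lt_of_le one_pos hC1
  set B : ℝ := (2:ℝ) ^ (1/ε) with hBdef
  set m : ℕ := ⌈B⌉₊ with hmdef
  refine ⟨C ^ m, by positivity, ?_⟩
  intro n hn
  have hn' : n ≠ 0 := hn.ne'
  rw [Nat.card_divisors hn']
  push_cast
  -- per-prime bound
  have key : ∀ p ∈ n.primeFactors,
      ((n.factorization p : ℝ) + 1)
        ≤ (if (p:ℝ) < B then C else 1) * (p:ℝ) ^ ((n.factorization p : ℝ) * ε) := by
    intro p hp
    have hpp : p.Prime := Nat.prime_of_mem_primeFactors hp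
    have hp2 : (2:ℝ) ≤ p := by exact_mod_cast hpp.two_le
    have hp0 : (0:ℝ) < p := by linarith
    set a : ℕ := n.factorization p with hadef
    by_cases hsmall : (p:ℝ) < B
    · rw [if_pos hsmall]
      have hrpow : (p:ℝ) ^ ((a:ℝ) * ε) = Real.exp ((a:ℝ) * ε * Real.log p) := by
        rw [Real.rpow_def_of_pos hp0]
        ring_nf
      have hexp : 1 + (a:ℝ) * ε * Real.log p ≤ (p:ℝ) ^ ((a:ℝ) * ε) := by
        rw [hrpow]
        have := Real.add_one_le_exp ((a:ℝ) * ε * Real.log p)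
        linarith
      have hlogp : Real.log 2 ≤ Real.log p := Real.log_le_log (by norm_num) hp2
      have ha0 : (0:ℝ) ≤ (a:ℝ) := Nat.cast_nonneg a
      have h1 : 1 + (a:ℝ) * ε * Real.log 2 ≤ 1 + (a:ℝ) * ε * Real.log p := by
        have := mul_le_mul_of_nonneg_left hlogp (by positivity : (0:ℝ) ≤ (a:ℝ) * ε)
        linarith
      have h2 : (a:ℝ) + 1 ≤ C * (1 + (a:ℝ) * ε * Real.log 2) := by
        rw [hCdef]
        have hpos : 0 < ε * Real.log 2 := by positivity
        have expand : (1 + 1 / (ε * Real.log 2)) * (1 + (a:ℝ) * ε * Real.log 2)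
            = 1 + (a:ℝ) * ε * Real.log 2 + 1 / (ε * Real.log 2) + (a:ℝ) := by
          field_simp
          ring
        rw [expand]
        have : (0:ℝ) ≤ (a:ℝ) * ε * Real.log 2 := by positivity
        have : (0:ℝ) ≤ 1 / (ε * Real.log 2) := by positivity
        linarith
      calc (a:ℝ) + 1 ≤ C * (1 + (a:ℝ) * ε * Real.log 2) := h2
        _ ≤ C * (1 + (a:ℝ) * ε * Real.log p) := by
            exact mul_le_mul_of_nonneg_left h1 (le_of_lt hC0)
        _ ≤ C * (p:ℝ) ^ ((a:ℝ) * ε) := mul_le_mul_of_nonneg_left hexp (le_of_lt hC0)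
    · rw [if_neg hsmall]
      rw [one_mul]
      push_neg at hsmall
      have h2le : (2:ℝ) ≤ (p:ℝ) ^ ε := by
        have : B ^ ε ≤ (p:ℝ) ^ ε := Real.rpow_le_rpow (by positivity) hsmall (le_of_lt hε)
        rwa [hBdef, ← Real.rpow_mul (by norm_num : (0:ℝ) ≤ 2), one_div,
          inv_mul_cancel₀ hε.ne', Real.rpow_one] at this
      have hrw : (p:ℝ) ^ ((a:ℝ) * ε) = ((p:ℝ) ^ ε) ^ a := by
        rw [mul_comm, Real.rpow_mul (le_of_lt hp0), Real.rpow_natCast]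
      rw [hrw]
      have h2a : ((a:ℝ) + 1) ≤ (2:ℝ) ^ a := by
        have := Nat.lt_two_pow_self (n := a)
        exact_mod_cast Nat.succ_le_of_lt this
      calc (a:ℝ) + 1 ≤ (2:ℝ) ^ a := h2a
        _ ≤ ((p:ℝ) ^ ε) ^ a := pow_le_pow_left₀ (by norm_num) h2le a
  -- multiply out
  have hprod : (∏ p ∈ n.primeFactors, ((n.factorization p : ℝ) + 1))
      ≤ ∏ p ∈ n.primeFactors,
          (if (p:ℝ) < B then C else 1) * (p:ℝ) ^ ((n.factorization p : ℝ) * ε) := by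
    refine Finset.prod_le_prod (fun p _ => by positivity) key
  have hsplit : (∏ p ∈ n.primeFactors,
        (if (p:ℝ) < B then C else 1) * (p:ℝ) ^ ((n.factorization p : ℝ) * ε))
      = (∏ p ∈ n.primeFactors, (if (p:ℝ) < B then C else 1))
        * ∏ p ∈ n.primeFactors, (p:ℝ) ^ ((n.factorization p : ℝ) * ε) :=
    Finset.prod_mul_distrib
  have hw : (∏ p ∈ n.primeFactors, (if (p:ℝ) < B then C else 1)) ≤ C ^ m := by
    rw [Finset.prod_ite]
    simp only [Finset.prod_const, Finset.prod_const_one, mul_one, one_pow]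
    have hcard : (n.primeFactors.filter (fun p : ℕ => (p:ℝ) < B)).card ≤ m := by
      have hsub : n.primeFactors.filter (fun p : ℕ => (p:ℝ) < B) ⊆ Finset.range m := by
        intro p hp
        rw [Finset.mem_range]
        exact Nat.lt_ceil.mpr (Finset.mem_filter.mp hp).2
      calc (n.primeFactors.filter (fun p : ℕ => (p:ℝ) < B)).card
          ≤ (Finset.range m).card := Finset.card_le_card hsub
        _ = m := Finset.card_range m
    exact pow_le_pow_right₀ hC1 hcard
  have hmain : (∏ p ∈ n.primeFactors, (p:ℝ) ^ ((n.factorization p : ℝ) * ε)) = (n:ℝ) ^ ε := by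
    have h1 : ∀ p ∈ n.primeFactors, (p:ℝ) ^ ((n.factorization p : ℝ) * ε)
        = ((p:ℝ) ^ (n.factorization p : ℕ)) ^ ε := by
      intro p hp
      have hp0 : (0:ℝ) ≤ p := Nat.cast_nonneg p
      rw [← Real.rpow_natCast (p:ℝ) (n.factorization p), ← Real.rpow_mul hp0]
    rw [Finset.prod_congr rfl h1]
    rw [Real.finset_prod_rpow _ _ (fun p _ => by positivity) ε]
    congr 1
    have hfac : (∏ p ∈ n.primeFactors, p ^ n.factorization p : ℕ) = n := by
      rw [← Nat.prod_factorization_eq_prod_primeFactors (fun p k => p ^ k)]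
      exact Nat.factorization_prod_pow_eq_self hn'
    calc (∏ p ∈ n.primeFactors, (p:ℝ) ^ (n.factorization p : ℕ))
        = ((∏ p ∈ n.primeFactors, p ^ n.factorization p : ℕ) : ℝ) := by push_cast; rfl
      _ = (n:ℝ) := by rw [hfac]
  calc (∏ p ∈ n.primeFactors, ((n.factorization p : ℝ) + 1))
      ≤ (∏ p ∈ n.primeFactors, (if (p:ℝ) < B then C else 1))
        * ∏ p ∈ n.primeFactors, (p:ℝ) ^ ((n.factorization p : ℝ) * ε) := by
        rw [← hsplit]; exact hprod
    _ ≤ C ^ m * (n:ℝ) ^ ε := by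
        rw [hmain]
        exact mul_le_mul_of_nonneg_right hw (by positivity)

theorem stmt8 (ε : ℝ) (hε : 0 < ε) :
    ∃ K : ℝ, 0 < K ∧ ∀ c : ℕ, Odd c → 0 < c → ∀ n : ℤ,
      ‖salie 0 n c‖ ^ 2 ≤ K * (c : ℝ) ^ (1 + ε) * (Int.gcd n c : ℝ) := by
  obtain ⟨K₀, hK₀, hbd⟩ := card_divisors_rpow_le (ε/2) (by positivity)
  refine ⟨K₀^2, by positivity, ?_⟩
  intro c hodd hc n
  haveI : NeZero c := ⟨hc.ne'⟩
  have hc0 : (0:ℝ) < c := by exact_mod_cast hc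
  have hτ0 : (0:ℝ) ≤ (c.divisors.card : ℝ) := by positivity
  have hg0 : (0:ℝ) ≤ (Int.gcd n c : ℝ) := by positivity
  have h1 := salie_sq (c := c) n
  have h2 := sum_units_gcd_le (c := c) n
  have hτ := hbd c hc
  calc ‖salie 0 n c‖ ^ 2
      ≤ (c.divisors.card : ℝ) *
          ∑ k : (ZMod c)ˣ, (Nat.gcd ((n : ZMod c) * ((k : ZMod c) - 1)).val c : ℝ) := h1
    _ ≤ (c.divisors.card : ℝ) * ((Int.gcd n c : ℝ) * ((c.divisors.card : ℝ) * c)) :=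
        mul_le_mul_of_nonneg_left h2 hτ0
    _ = ((c.divisors.card : ℝ) * (c.divisors.card : ℝ)) * c * (Int.gcd n c : ℝ) := by ring
    _ ≤ ((K₀ * (c:ℝ)^(ε/2)) * (K₀ * (c:ℝ)^(ε/2))) * c * (Int.gcd n c : ℝ) := by
        have hm : ((c.divisors.card : ℝ) * (c.divisors.card : ℝ))
            ≤ (K₀ * (c:ℝ)^(ε/2)) * (K₀ * (c:ℝ)^(ε/2)) := mul_self_le_mul_self hτ0 hτ
        exact mul_le_mul_of_nonneg_right (mul_le_mul_of_nonneg_right hm hc0.le) hg0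
    _ = K₀^2 * ((c:ℝ)^(ε/2) * (c:ℝ)^(ε/2) * (c:ℝ)) * (Int.gcd n c : ℝ) := by ring
    _ = K₀^2 * (c:ℝ)^(1+ε) * (Int.gcd n c : ℝ) := by
        have hhalf : (c:ℝ)^(ε/2) * (c:ℝ)^(ε/2) = (c:ℝ)^ε := by
          rw [← Real.rpow_add hc0]
          norm_num
        rw [hhalf]
        have : (c:ℝ)^ε * (c:ℝ) = (c:ℝ)^(1+ε) := by
          rw [show (1+ε) = ε + 1 by ring, Real.rpow_add hc0, Real.rpow_one]
        rw [this]
end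

section
/- Let G, R be positive integers with 4 | G and such that a prime p divides 2R if and only if p divides G. Let t_1, t_2 > 2 and f be integers with f^2 > (t_1^2−4)(t_2^2−4), such that a prime p divides 2·gcd(t_1^2−4, f) if and only if p | G, and ∏_{p|G} p^{ν_p(f^2−(t_1^2−4)(t_2^2−4))} = G and ∏_{p|G} p^{ν_p(t_1^2−4)} = R. Set N = (f^2−(t_1^2−4)(t_2^2−4))/G. Then N is an integer with gcd(N, G) = 1, and for every positive divisor D of N one has the identity of Jacobi symbols ((t_1^2−4)/D) = ((t_1^2−4)/(N/D)) · κ, where κ ∈ {−1, 1} is given by κ = (R / N) · (−1)^{((N−1)/2)·(((t_1^2−4)/R − 1)/2)} · (G / ((t_1^2−4)/R)), with (·/·) denoting Jacobi symbols. -/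
open scoped Classical

private lemma coprime_helper {x y : ℕ} (h : ∀ q : ℕ, q.Prime → q ∣ y → ¬ q ∣ x) :
    Nat.Coprime x y := by
  by_contra hc
  obtain ⟨q, hq, hqd⟩ := Nat.exists_prime_and_dvd hc
  exact h q hq (hqd.trans (Nat.gcd_dvd_right x y)) (hqd.trans (Nat.gcd_dvd_left x y))

private lemma prod_fac_helper (T : Finset ℕ) (hT : ∀ p ∈ T, p.Prime) (n R : ℕ) (hn : n ≠ 0)
    (h : ∏ p ∈ T, p ^ n.factorization p = R) :
    R ∣ n ∧ ∀ q ∈ T, ¬ q ∣ n / R := by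
  have hR0 : R ≠ 0 := by
    rw [← h]
    exact Finset.prod_ne_zero_iff.mpr fun p hp => pow_ne_zero _ (hT p hp).pos.ne'
  have hfac : ∀ q : ℕ, R.factorization q = if q ∈ T then n.factorization q else 0 := by
    intro q
    rw [← h, Nat.factorization_prod (fun p hp => pow_ne_zero _ (hT p hp).pos.ne'),
      Finset.sum_apply',
      Finset.sum_congr rfl (fun p hp => by
        rw [(hT p hp).factorization_pow, Finsupp.single_apply]),
      Finset.sum_ite_eq' T q _]
  have hdvd : R ∣ n := by
    rw [← Nat.factorization_le_iff_dvd hR0 hn]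
    intro q
    rw [hfac]
    split <;> simp
  refine ⟨hdvd, fun q hq hqd => ?_⟩
  have hq' := hT q hq
  have hnd0 : n / R ≠ 0 :=
    (Nat.div_pos (Nat.le_of_dvd (Nat.pos_of_ne_zero hn) hdvd) (Nat.pos_of_ne_zero hR0)).ne'
  have h0 : (n / R).factorization q = 0 := by
    rw [Nat.factorization_div hdvd, Finsupp.tsub_apply, hfac, if_pos hq, Nat.sub_self]
  exact absurd (hq'.factorization_pos_of_dvd hnd0 hqd) (by omega)

theorem stmt12 (G R : ℕ) (hGpos : 0 < G) (hRpos : 0 < R) (h4G : 4 ∣ G)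
    (hGR : ∀ p : ℕ, p.Prime → (p ∣ 2 * R ↔ p ∣ G))
    (t1 t2 f : ℤ) (h1 : 2 < t1) (h2 : 2 < t2)
    (hbig : (t1 ^ 2 - 4) * (t2 ^ 2 - 4) < f ^ 2)
    (hgcd : ∀ p : ℕ, p.Prime →
      ((p : ℤ) ∣ 2 * (Int.gcd (t1 ^ 2 - 4) f : ℤ) ↔ p ∣ G))
    (hGprod : ∏ p ∈ G.primeFactors,
        p ^ padicValInt p (f ^ 2 - (t1 ^ 2 - 4) * (t2 ^ 2 - 4)) = G)
    (hRprod : ∏ p ∈ G.primeFactors, p ^ padicValInt p (t1 ^ 2 - 4) = R)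
    (N : ℤ) (hN : N = (f ^ 2 - (t1 ^ 2 - 4) * (t2 ^ 2 - 4)) / G) :
    (G : ℤ) ∣ f ^ 2 - (t1 ^ 2 - 4) * (t2 ^ 2 - 4) ∧
    Int.gcd N G = 1 ∧
    ∀ κ : ℤ,
      κ = jacobiSym (R : ℤ) N.toNat *
          (-1 : ℤ) ^ (((N - 1) / 2).toNat *
            (((t1 ^ 2 - 4) / (R : ℤ) - 1) / 2).toNat) *
          jacobiSym (G : ℤ) ((t1 ^ 2 - 4) / (R : ℤ)).toNat →
      (κ = 1 ∨ κ = -1) ∧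
      ∀ D : ℕ, 0 < D → (D : ℤ) ∣ N →
        jacobiSym (t1 ^ 2 - 4) D = jacobiSym (t1 ^ 2 - 4) (N.toNat / D) * κ := by
  set A : ℤ := t1 ^ 2 - 4 with hA
  set M : ℤ := f ^ 2 - A * (t2 ^ 2 - 4) with hM
  have hApos : 0 < A := by rw [hA]; nlinarith
  have hMpos : 0 < M := by rw [hM]; linarith
  obtain ⟨m, hm⟩ : ∃ m : ℕ, (m : ℤ) = M := ⟨M.toNat, Int.toNat_of_nonneg hMpos.le⟩
  obtain ⟨a, ha⟩ : ∃ a : ℕ, (a : ℤ) = A := ⟨A.toNat, Int.toNat_of_nonneg hApos.le⟩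
  have hmpos : 0 < m := by
    have h0 : (0 : ℤ) < (m : ℤ) := by rw [hm]; exact hMpos
    exact_mod_cast h0
  have hapos : 0 < a := by
    have h0 : (0 : ℤ) < (a : ℤ) := by rw [ha]; exact hApos
    exact_mod_cast h0
  have hm0 : m ≠ 0 := hmpos.ne'
  have ha0 : a ≠ 0 := hapos.ne'
  have hTprime : ∀ p ∈ G.primeFactors, p.Prime := fun p hp => Nat.prime_of_mem_primeFactors hp
  -- rewrite products in terms of factorization
  have hGprod' : ∏ p ∈ G.primeFactors, p ^ m.factorization p = G := by
    calc ∏ p ∈ G.primeFactors, p ^ m.factorization p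
        = ∏ p ∈ G.primeFactors, p ^ padicValInt p M :=
          Finset.prod_congr rfl fun p hp => by
            rw [← hm, padicValInt.of_nat, Nat.factorization_def m (hTprime p hp)]
      _ = G := hGprod
  have hRprod' : ∏ p ∈ G.primeFactors, p ^ a.factorization p = R := by
    calc ∏ p ∈ G.primeFactors, p ^ a.factorization p
        = ∏ p ∈ G.primeFactors, p ^ padicValInt p A :=
          Finset.prod_congr rfl fun p hp => by
            rw [← ha, padicValInt.of_nat, Nat.factorization_def a (hTprime p hp)]
      _ = R := hRprod
  obtain ⟨hGm, hGm'⟩ := prod_fac_helper G.primeFactors hTprime m G hm0 hGprod'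
  obtain ⟨hRa, hRa'⟩ := prod_fac_helper G.primeFactors hTprime a R ha0 hRprod'
  set n : ℕ := m / G with hn
  set r : ℕ := a / R with hr
  have hnpos : 0 < n := Nat.div_pos (Nat.le_of_dvd (Nat.pos_of_ne_zero hm0) hGm) hGpos
  have hrpos : 0 < r := Nat.div_pos (Nat.le_of_dvd (Nat.pos_of_ne_zero ha0) hRa) hRpos
  have hmn : m = G * n := (Nat.mul_div_cancel' hGm).symm
  have har : a = R * r := (Nat.mul_div_cancel' hRa).symm
  have hNn : N = (n : ℤ) := by
    rw [hN, ← hm, ← Int.natCast_div]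
  have hNtoNat : N.toNat = n := by rw [hNn]; exact Int.toNat_natCast n
  have h2G : 2 ∣ G := dvd_trans ⟨2, rfl⟩ h4G
  have h2mem : 2 ∈ G.primeFactors := Nat.mem_primeFactors.mpr ⟨Nat.prime_two, h2G, hGpos.ne'⟩
  -- coprimality: n with G
  have hcop_nG : Nat.Coprime n G := by
    refine coprime_helper fun q hq hqG hqn => ?_
    exact hGm' q (Nat.mem_primeFactors.mpr ⟨hq, hqG, hGpos.ne'⟩) hqn
  -- coprimality: r with G
  have hcop_rG : Nat.Coprime r G := by
    refine coprime_helper fun q hq hqG hqr => ?_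
    exact hRa' q (Nat.mem_primeFactors.mpr ⟨hq, hqG, hGpos.ne'⟩) hqr
  -- oddness
  have hgcd_nG : Nat.gcd n G = 1 := hcop_nG
  have hnodd : n % 2 = 1 := by
    have h2n : ¬ 2 ∣ n := fun h2n => by
      have h22 := Nat.dvd_gcd h2n h2G
      omega
    omega
  have hrodd : r % 2 = 1 := by
    have h2r : ¬ 2 ∣ r := hRa' 2 h2mem
    omega
  -- coprime a n
  have hcop_an : Nat.Coprime a n := by
    refine (coprime_helper fun q hq hqn hqa => ?_)
    have hqm : q ∣ m := hqn.trans (Nat.div_dvd_of_dvd hGm)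
    have hqA : (q : ℤ) ∣ A := ha ▸ Int.natCast_dvd_natCast.mpr hqa
    have hqM : (q : ℤ) ∣ M := hm ▸ Int.natCast_dvd_natCast.mpr hqm
    have hqf : (q : ℤ) ∣ f := by
      have hqf2 : (q : ℤ) ∣ f ^ 2 := by
        have : f ^ 2 = M + A * (t2 ^ 2 - 4) := by rw [hM]; ring
        rw [this]; exact dvd_add hqM (hqA.mul_right _)
      exact (Int.Prime.dvd_pow' (by exact_mod_cast hq) hqf2)
    have hqgcd : (q : ℤ) ∣ 2 * (Int.gcd A f : ℤ) :=
      (Int.dvd_coe_gcd hqA hqf).mul_left 2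
    have hqG : q ∣ G := (hgcd q hq).mp hqgcd
    have hqq := Nat.dvd_gcd hqn hqG
    rw [hgcd_nG] at hqq
    exact hq.one_lt.ne' (Nat.dvd_one.mp hqq)
  -- coprime f r (as Int.gcd)
  have hcop_fr : Int.gcd f (r : ℤ) = 1 := by
    have : Nat.Coprime f.natAbs r := by
      refine coprime_helper fun q hq hqr hqf' => ?_
      have hqa : q ∣ a := hqr.trans (Nat.div_dvd_of_dvd hRa)
      have hqA : (q : ℤ) ∣ A := ha ▸ Int.natCast_dvd_natCast.mpr hqa
      have hqf : (q : ℤ) ∣ f := Int.natCast_dvd.mpr hqf'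
      have hqgcd : (q : ℤ) ∣ 2 * (Int.gcd A f : ℤ) := (Int.dvd_coe_gcd hqA hqf).mul_left 2
      have hqG : q ∣ G := (hgcd q hq).mp hqgcd
      exact hRa' q (Nat.mem_primeFactors.mpr ⟨hq, hqG, hGpos.ne'⟩) hqr
    rw [Int.gcd, Int.natAbs_natCast]
    exact this
  -- A / R = r as integers
  have hAR : A / (R : ℤ) = (r : ℤ) := by
    rw [← ha, har]
    push_cast
    rw [Int.mul_ediv_cancel_left _ (by exact_mod_cast hRpos.ne')]
  -- the three toNat rewrites
  have e1 : ((N - 1) / 2).toNat = n / 2 := by rw [hNn]; omega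
  have e2 : ((A / (R : ℤ) - 1) / 2).toNat = r / 2 := by rw [hAR]; omega
  have e3 : (A / (R : ℤ)).toNat = r := by rw [hAR]; exact Int.toNat_natCast r
  -- key Jacobi facts
  have hgcd_Gr : Int.gcd (G : ℤ) (r : ℕ) = 1 := by
    rw [Int.gcd_natCast_natCast]; exact hcop_rG.symm
  have hgcd_An : Int.gcd A (n : ℕ) = 1 := by
    rw [← ha, Int.gcd_natCast_natCast]; exact hcop_an
  have hGG : jacobiSym (G : ℤ) r * jacobiSym (G : ℤ) r = 1 := by
    have := jacobiSym.sq_one hgcd_Gr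
    rwa [sq] at this
  have hMod : jacobiSym (M : ℤ) r = 1 := by
    have hrA : (r : ℤ) ∣ A := by
      rw [← ha, har]; push_cast; exact Dvd.intro_left _ rfl
    have hcong : M % (r : ℤ) = f ^ 2 % (r : ℤ) := by
      have hd : ((r : ℕ) : ℤ) ∣ f ^ 2 - M := by
        have he : f ^ 2 - M = A * (t2 ^ 2 - 4) := by rw [hM]; ring
        rw [he]
        exact hrA.mul_right _
      exact Int.modEq_iff_dvd.mpr hd
    rw [jacobiSym.mod_left' hcong]
    exact jacobiSym.sq_one' hcop_fr
  have hnr : jacobiSym ((n : ℕ) : ℤ) r = jacobiSym (G : ℤ) r := by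
    have h1 : jacobiSym (G : ℤ) r * jacobiSym ((n : ℕ) : ℤ) r = 1 := by
      rw [← jacobiSym.mul_left, ← Nat.cast_mul, ← hmn, hm]
      exact hMod
    have := congrArg (fun x => jacobiSym (G : ℤ) r * x) h1
    simpa [← mul_assoc, hGG] using this
  -- the main identity: J(A | n) = κ-expression
  have hmain : jacobiSym A n =
      jacobiSym (R : ℤ) n * (-1 : ℤ) ^ (n / 2 * (r / 2)) * jacobiSym (G : ℤ) r := by
    have hsplit : jacobiSym A n = jacobiSym (R : ℤ) n * jacobiSym ((r : ℕ) : ℤ) n := by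
      rw [← jacobiSym.mul_left, ← Nat.cast_mul, ← har, ha]
    rw [hsplit, jacobiSym.quadratic_reciprocity (Nat.odd_iff.mpr hrodd) (Nat.odd_iff.mpr hnodd),
      hnr, Nat.mul_comm (r / 2) (n / 2)]
    ring
  refine ⟨?_, ?_, ?_⟩
  · rw [← hm]; exact Int.natCast_dvd_natCast.mpr hGm
  · rw [hNn, Int.gcd_natCast_natCast]; exact hcop_nG
  · intro κ hκ
    have hκ' : κ = jacobiSym A n := by
      rw [hκ, hNtoNat, e1, e2, e3, hmain]
    constructor
    · rw [hκ']; exact jacobiSym.eq_one_or_neg_one hgcd_An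
    · intro D hD hDN
      have hDn : D ∣ n := by rwa [hNn, Int.natCast_dvd_natCast] at hDN
      have hnd0 : n / D ≠ 0 := (Nat.div_pos (Nat.le_of_dvd hnpos hDn) hD).ne'
      have hprod : jacobiSym A n = jacobiSym A D * jacobiSym A (n / D) := by
        conv_lhs => rw [← Nat.mul_div_cancel' hDn]
        exact jacobiSym.mul_right' A hD.ne' hnd0
      have hgcd_AnD : Int.gcd A ((n / D : ℕ)) = 1 := by
        rw [← ha, Int.gcd_natCast_natCast]
        exact Nat.Coprime.coprime_dvd_right (Nat.div_dvd_of_dvd hDn) hcop_an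
      have hsq : jacobiSym A (n / D) * jacobiSym A (n / D) = 1 := by
        have := jacobiSym.sq_one hgcd_AnD
        rwa [sq] at this
      rw [hNtoNat, hκ', hprod]
      linear_combination (-(jacobiSym A D)) * hsq
end
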